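/- arXiv:math/0611354 — 6 statements merged into one kernel-verified Lean document; each statement's English description precedes it below -/
import Mathlib

section
/- Let η = [0; a₁, a₂, …] be an irrational number in (0,1) with convergents pₙ/qₙ. If the word a₁a₂⋯aₙ is a palindrome, then pₙ = qₙ₋₁ and |η² − pₙ₋₁/qₙ| < (a₁ + 3)/qₙ². -/
open GenContFract Matrix

private def cfM (x : ℝ) : Matrix (Fin 2) (Fin 2) ℝ := !![x, 1; 1, 0]

private lemma cfM_transpose (x : ℝ) : (cfM x)ᵀ = cfM x := by
  ext i j
  fin_cases i <;> fin_cases j <;> simp [cfM]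

private def cfP (b : ℕ → ℝ) (m : ℕ) : Matrix (Fin 2) (Fin 2) ℝ :=
  ((List.range m).map fun i => cfM (b i)).prod

private lemma cfP_succ (b : ℕ → ℝ) (m : ℕ) : cfP b (m + 1) = cfP b m * cfM (b m) := by
  simp [cfP, List.range_succ]

private lemma cfP_eq (η : ℝ) (b : ℕ → ℝ) (hh : (GenContFract.of η).h = 0)
    (hs : ∀ m, (GenContFract.of η).s.get? m = some ⟨1, b m⟩) : ∀ m,
    cfP b (m + 1) = !![(GenContFract.of η).dens (m + 1), (GenContFract.of η).dens m;
      (GenContFract.of η).nums (m + 1), (GenContFract.of η).nums m] := by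
  intro m
  induction m with
  | zero =>
    have hd1 : (GenContFract.of η).dens 1 = b 0 := first_den_eq (hs 0)
    have hn1 : (GenContFract.of η).nums 1 = (1 : ℝ) := by
      rw [first_num_eq (hs 0), hh]; ring
    have hn0 : (GenContFract.of η).nums 0 = 0 := by rw [zeroth_num_eq_h, hh]
    have hd0 : (GenContFract.of η).dens 0 = 1 := zeroth_den_eq_one
    rw [cfP_succ]
    ext i j
    fin_cases i <;> fin_cases j <;>
      simp [cfP, cfM, hd1, hn1, hn0, hd0]
  | succ k ih =>
    have hd := dens_recurrence (g := GenContFract.of η) (hs (k + 1)) rfl rfl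
    have hn := nums_recurrence (g := GenContFract.of η) (hs (k + 1)) rfl rfl
    rw [cfP_succ, ih]
    ext i j
    fin_cases i <;> fin_cases j <;>
      simp [cfM, Matrix.mul_fin_two, hd, hn] <;> ring

/-- If `η ∈ (0,1)` is irrational with continued fraction expansion `[0; a₁, a₂, …]`
(convergents `pₙ/qₙ`) and the word `a₁ ⋯ aₙ` is a palindrome, then `pₙ = qₙ₋₁` and
`|η² - pₙ₋₁/qₙ| < (a₁ + 3)/qₙ²`. -/
theorem palindrome_prefix_approx (η : ℝ) (hη : Irrational η) (h0 : 0 < η) (h1 : η < 1)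
    (n : ℕ) (hn : 1 ≤ n)
    (hpal : ∀ j, 1 ≤ j → j ≤ n →
      (GenContFract.of η).partDens.get? (j - 1) = (GenContFract.of η).partDens.get? (n - j))
    (a1 : ℝ) (ha1 : (GenContFract.of η).partDens.get? 0 = some a1) :
    (GenContFract.of η).nums n = (GenContFract.of η).dens (n - 1) ∧
      |η ^ 2 - (GenContFract.of η).nums (n - 1) / (GenContFract.of η).dens n| <
        (a1 + 3) / ((GenContFract.of η).dens n) ^ 2 := by
  have hterm : ¬(GenContFract.of η).Terminates := by
    intro h
    rcases (terminates_iff_rat η).mp h with ⟨q, hq⟩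
    exact hη ⟨q, hq.symm⟩
  have hnt : ∀ m, ¬(GenContFract.of η).TerminatedAt m := fun m h => hterm ⟨m, h⟩
  have hex : ∀ m, ∃ bm, (GenContFract.of η).partDens.get? m = some bm := by
    intro m
    refine Option.ne_none_iff_exists'.mp fun h => hnt m ?_
    exact terminatedAt_iff_partDen_none.mpr h
  choose b hb using hex
  have hs : ∀ m, (GenContFract.of η).s.get? m = some ⟨1, b m⟩ := by
    intro m
    obtain ⟨gp, hgp, hgpb⟩ := exists_s_b_of_partDen (hb m)
    have ha : gp.a = 1 := of_partNum_eq_one (partNum_eq_s_a hgp)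
    rcases gp with ⟨ga, gb⟩
    simp only at ha hgpb
    rw [hgp, ha, hgpb]
  have hh : (GenContFract.of η).h = 0 := by
    rw [of_h_eq_floor]
    have : ⌊η⌋ = 0 := Int.floor_eq_zero_iff.mpr ⟨h0.le, h1⟩
    simp [this]
  -- palindrome at the level of `b`
  have hbpal : ∀ i, i < n → b i = b (n - 1 - i) := by
    intro i hi
    have h' := hpal (i + 1) (by omega) (by omega)
    have h2 : n - (i + 1) = n - 1 - i := by omega
    rw [h2, Nat.add_sub_cancel, hb i, hb (n - 1 - i)] at h'
    exact Option.some_injective _ h'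
  -- the matrix is symmetric
  have hlist : ((List.range n).map fun i => cfM (b i)).reverse
      = (List.range n).map fun i => cfM (b i) := by
    apply List.ext_getElem
    · simp
    · intro i hi1 hi2
      simp only [List.length_map, List.length_range] at hi2
      simp only [List.getElem_reverse, List.getElem_map, List.getElem_range,
        List.length_map, List.length_range]
      exact (congrArg (fun x => cfM x) (hbpal i hi2)).symm
  have hsymm : (cfP b n)ᵀ = cfP b n := by
    rw [cfP, Matrix.transpose_list_prod, List.map_map]
    have : (Matrix.transpose ∘ fun i => cfM (b i)) = fun i => cfM (b i) := by
      funext i; exact cfM_transpose (b i)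
    rw [this, hlist]
  obtain ⟨m, rfl⟩ : ∃ m, n = m + 1 := ⟨n - 1, by omega⟩
  have hP := cfP_eq η b hh hs m
  have part1 : (GenContFract.of η).nums (m + 1) = (GenContFract.of η).dens m := by
    have h' := congrFun (congrFun hsymm 0) 1
    rw [Matrix.transpose_apply, hP] at h'
    simpa using h'
  have hone : ∀ k, (1 : ℝ) ≤ (GenContFract.of η).dens k := by
    intro k
    have h' := succ_nth_fib_le_of_nth_den (v := η) (n := k) (Or.inr (hnt _))
    calc (1 : ℝ) ≤ (Nat.fib (k + 1) : ℝ) := by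
          exact_mod_cast Nat.fib_pos.mpr k.succ_pos
      _ ≤ _ := h'
  set Q := (GenContFract.of η).dens (m + 1) with hQdef
  set Qp := (GenContFract.of η).dens m with hQpdef
  set Q2 := (GenContFract.of η).dens (m + 2) with hQ2def
  set A := (GenContFract.of η).nums m with hAdef
  have hQ1 : (1 : ℝ) ≤ Q := hone (m + 1)
  have hQp1 : (1 : ℝ) ≤ Qp := hone m
  have hQ0 : (0 : ℝ) < Q := lt_of_lt_of_le one_pos hQ1
  have hQp0 : (0 : ℝ) < Qp := lt_of_lt_of_le one_pos hQp1
  have hdm : Qp ≤ Q := of_den_mono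
  have hd2 : Q ≤ Q2 := of_den_mono
  refine ⟨by simpa using part1, ?_⟩
  have ha1' : (1 : ℝ) ≤ a1 := of_one_le_get?_partDen ha1
  -- approximation
  have happ : |η - Qp / Q| ≤ 1 / (Q * Q2) := by
    have h' := abs_sub_convs_le (v := η) (n := m + 1) (hnt (m + 1))
    rwa [conv_eq_num_div_den, part1] at h'
  have h2 : |η - Qp / Q| ≤ 1 / Q ^ 2 := by
    refine happ.trans ?_
    have hle : Q ^ 2 ≤ Q * Q2 := by nlinarith
    have : (0 : ℝ) < Q ^ 2 := by positivity
    exact one_div_le_one_div_of_le this hle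
  have hr1 : Qp / Q ≤ 1 := (div_le_one hQ0).mpr hdm
  have hr0 : (0 : ℝ) ≤ Qp / Q := by positivity
  have hsq : |η ^ 2 - (Qp / Q) ^ 2| ≤ 2 / Q ^ 2 := by
    have hfac : η ^ 2 - (Qp / Q) ^ 2 = (η - Qp / Q) * (η + Qp / Q) := by ring
    rw [hfac, abs_mul]
    have h3 : |η + Qp / Q| ≤ 2 := by
      rw [abs_of_nonneg (by linarith)]
      linarith
    calc |η - Qp / Q| * |η + Qp / Q| ≤ (1 / Q ^ 2) * 2 :=
          mul_le_mul h2 h3 (abs_nonneg _) (by positivity)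
      _ = 2 / Q ^ 2 := by ring
  -- determinant
  have hdet : A * Q - Qp * Qp = (-1 : ℝ) ^ (m + 1) := by
    have h' := SimpContFract.determinant (K := ℝ)
      (s := ⟨GenContFract.of η, of_isSimpContFract η⟩) (n := m) (hnt m)
    rw [part1] at h'
    exact h'
  have hmid : |(Qp / Q) ^ 2 - A / Q| = 1 / Q ^ 2 := by
    have hfac : (Qp / Q) ^ 2 - A / Q = -((A * Q - Qp * Qp) / Q ^ 2) := by
      field_simp
      ring
    rw [hfac, hdet, abs_neg, abs_div, abs_pow, abs_neg, abs_one, one_pow,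
      abs_of_pos (by positivity : (0:ℝ) < Q ^ 2)]
  calc |η ^ 2 - A / Q| ≤ |η ^ 2 - (Qp / Q) ^ 2| + |(Qp / Q) ^ 2 - A / Q| := abs_sub_le _ _ _
    _ ≤ 2 / Q ^ 2 + 1 / Q ^ 2 := by rw [hmid]; linarith
    _ = 3 / Q ^ 2 := by ring
    _ < (a1 + 3) / Q ^ 2 := by
        have hQ2 : (0 : ℝ) < Q ^ 2 := by positivity
        gcongr
        linarith
end

section
/- Let η be an irrational number in (0,1) whose continued fraction partial quotients are bounded and whose sequence of partial quotients begins with infinitely many palindromes (i.e., there are infinitely many n such that a₁⋯aₙ is a palindrome). Then λ₂(η) ≥ 1, i.e., for every ε > 0 there are infinitely many integers q ≥ 1 with max(‖qη‖, ‖qη²‖) ≤ q^{−1+ε}. -/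
open Matrix

noncomputable def cfMat (a : ℝ) : Matrix (Fin 2) (Fin 2) ℝ := !![a, 1; 1, 0]
noncomputable def cfProd (l : List ℝ) : Matrix (Fin 2) (Fin 2) ℝ := (l.map cfMat).prod

lemma cfMat_transpose (a : ℝ) : (cfMat a)ᵀ = cfMat a := by
  ext i j; fin_cases i <;> fin_cases j <;> rfl

lemma cfProd_reverse (l : List ℝ) : (cfProd l)ᵀ = cfProd l.reverse := by
  induction l with
  | nil => simp [cfProd]
  | cons a l ih =>
    simp only [cfProd, List.map_cons, List.prod_cons, Matrix.transpose_mul,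
      List.reverse_cons, List.map_append, List.map_nil,
      List.prod_append, List.prod_cons, List.prod_nil, mul_one]
    rw [cfMat_transpose]
    exact congrArg (· * cfMat a) ih

lemma cfProd_append (l1 l2 : List ℝ) : cfProd (l1 ++ l2) = cfProd l1 * cfProd l2 := by
  simp [cfProd]

/-- If `η ∈ (0,1)` is irrational, has bounded partial quotients, and its sequence of
partial quotients begins with infinitely many palindromes, then `λ₂(η) ≥ 1`: for every
`ε > 0` there are infinitely many integers `q ≥ 1` with
`max ‖qη‖ ‖qη²‖ ≤ q^(-1+ε)`, where `‖t‖ = |t - round t|`. -/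
theorem palindromes_implies_lambda_two_ge_one (η : ℝ) (hη : Irrational η)
    (h0 : 0 < η) (h1 : η < 1)
    (hbdd : ∃ B : ℝ, ∀ i b, (GenContFract.of η).partDens.get? i = some b → b ≤ B)
    (hpal : {n : ℕ | 1 ≤ n ∧ ∀ j, 1 ≤ j → j ≤ n →
      (GenContFract.of η).partDens.get? (j - 1) =
        (GenContFract.of η).partDens.get? (n - j)}.Infinite) :
    ∀ ε : ℝ, 0 < ε →
      {q : ℕ | 1 ≤ q ∧
        max |(q : ℝ) * η - round ((q : ℝ) * η)| |(q : ℝ) * η ^ 2 - round ((q : ℝ) * η ^ 2)|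
          ≤ (q : ℝ) ^ (-1 + ε)}.Infinite := by
  intro ε hε
  set g := GenContFract.of η with hg
  -- the continued fraction never terminates
  have hnt : ∀ n, ¬ g.TerminatedAt n := by
    intro n hn
    have ht : g.Terminates := ⟨n, hn⟩
    rw [GenContFract.terminates_iff_rat] at ht
    obtain ⟨q, hq⟩ := ht
    exact hη ⟨q, hq.symm⟩
  have hsome : ∀ n, ∃ gp : GenContFract.Pair ℝ, g.s.get? n = some gp := fun n =>
    Option.ne_none_iff_exists'.1 (hnt n)
  choose gp hgp using hsome
  have ha : ∀ n, (gp n).a = 1 := fun n =>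
    GenContFract.of_partNum_eq_one (GenContFract.partNum_eq_s_a (hgp n))
  set b : ℕ → ℝ := fun n => (gp n).b with hb
  have hbd : ∀ n, g.partDens.get? n = some (b n) := fun n =>
    GenContFract.partDen_eq_s_b (hgp n)
  have hb1 : ∀ n, (1:ℝ) ≤ b n := fun n => GenContFract.of_one_le_get?_partDen (hbd n)
  have hbint : ∀ n, ∃ z : ℤ, b n = z := fun n =>
    GenContFract.exists_int_eq_of_partDen (hbd n)
  have hh0 : g.h = 0 := by
    rw [hg, GenContFract.of_h_eq_floor]
    exact_mod_cast Int.floor_eq_zero_iff.2 ⟨h0.le, h1⟩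
  have hd0 : g.dens 0 = 1 := GenContFract.zeroth_den_eq_one
  have hd1 : g.dens 1 = b 0 := GenContFract.first_den_eq (hgp 0)
  have hn0 : g.nums 0 = 0 := by rw [GenContFract.zeroth_num_eq_h, hh0]
  have hn1 : g.nums 1 = 1 := by
    rw [GenContFract.first_num_eq (hgp 0), hh0, ha 0]; ring
  have hdrec : ∀ n, g.dens (n+2) = b (n+1) * g.dens (n+1) + g.dens n := by
    intro n
    have := GenContFract.dens_recurrence (hgp (n+1)) (rfl : g.dens n = g.dens n)
      (rfl : g.dens (n+1) = g.dens (n+1))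
    rwa [ha (n+1), one_mul] at this
  have hnrec : ∀ n, g.nums (n+2) = b (n+1) * g.nums (n+1) + g.nums n := by
    intro n
    have := GenContFract.nums_recurrence (hgp (n+1)) (rfl : g.nums n = g.nums n)
      (rfl : g.nums (n+1) = g.nums (n+1))
    rwa [ha (n+1), one_mul] at this
  -- denominators are at least the Fibonacci numbers
  have hfib : ∀ n, (Nat.fib (n+1) : ℝ) ≤ g.dens n := by
    intro n
    rcases Nat.eq_zero_or_pos n with h | h
    · subst h; simp [hd0]
    · exact GenContFract.succ_nth_fib_le_of_nth_den (Or.inr (hnt (n-1)))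
  have hd1' : ∀ n, (1:ℝ) ≤ g.dens n := by
    intro n
    refine le_trans ?_ (hfib n)
    exact_mod_cast Nat.one_le_iff_ne_zero.2 (Nat.fib_pos.2 (Nat.succ_pos n)).ne'
  have hdpos : ∀ n, (0:ℝ) < g.dens n := fun n => lt_of_lt_of_le one_pos (hd1' n)
  -- integrality of numerators and denominators
  have hint : ∀ n, (∃ z : ℤ, g.nums n = z) ∧ (∃ z : ℤ, g.dens n = z) ∧
      (∃ z : ℤ, g.nums (n+1) = z) ∧ (∃ z : ℤ, g.dens (n+1) = z) := by
    intro n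
    induction n with
    | zero =>
      exact ⟨⟨0, by simp [hn0]⟩, ⟨1, by simp [hd0]⟩, ⟨1, by simp [hn1]⟩,
        (hbint 0).imp fun z hz => by rw [hd1, hz]⟩
    | succ n ih =>
      obtain ⟨⟨zn0, hzn0⟩, ⟨zd0, hzd0⟩, ⟨zn1, hzn1⟩, ⟨zd1, hzd1⟩⟩ := ih
      obtain ⟨zb, hzb⟩ := hbint (n+1)
      refine ⟨⟨zn1, hzn1⟩, ⟨zd1, hzd1⟩, ⟨zb * zn1 + zn0, ?_⟩, ⟨zb * zd1 + zd0, ?_⟩⟩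
      · rw [hnrec n, hzb, hzn1, hzn0]; push_cast; ring
      · rw [hdrec n, hzb, hzd1, hzd0]; push_cast; ring
  -- the matrix of continuants
  have hmat : ∀ n, cfProd ((List.range (n+1)).map b) =
      !![g.dens (n+1), g.dens n; g.nums (n+1), g.nums n] := by
    intro n
    induction n with
    | zero =>
      have h2 : cfProd ((List.range 1).map b) = cfMat (b 0) := by
        simp [cfProd, List.range_succ]
      rw [h2, hd1, hd0, hn1, hn0, cfMat]
    | succ n ih =>
      rw [List.range_succ, List.map_append, cfProd_append, ih]
      simp only [List.map_cons, List.map_nil]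
      have h2 : cfProd [b (n+1)] = cfMat (b (n+1)) := by simp [cfProd]
      rw [h2, cfMat, Matrix.mul_fin_two, hdrec n, hnrec n]
      ring_nf
  -- approximation: |dens n * η - nums n| ≤ 1 / dens (n+1)
  have happrox : ∀ n, |g.dens n * η - g.nums n| ≤ 1 / g.dens (n+1) := by
    intro n
    have h := GenContFract.abs_sub_convs_le (hnt n)
    rw [GenContFract.conv_eq_num_div_den] at h
    have hD := hdpos n
    have hD1 := hdpos (n+1)
    have key : g.dens n * η - g.nums n = g.dens n * (η - g.nums n / g.dens n) := by
      field_simp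
    rw [key, abs_mul, abs_of_pos hD]
    calc g.dens n * |η - g.nums n / g.dens n|
        ≤ g.dens n * (1 / (g.dens n * g.dens (n+1))) := mul_le_mul_of_nonneg_left h hD.le
      _ = 1 / g.dens (n+1) := by field_simp
  -- palindromes give nums (m+1) = dens m
  have hpalkey : ∀ m, ((m+1 : ℕ) ∈ {n : ℕ | 1 ≤ n ∧ ∀ j, 1 ≤ j → j ≤ n →
      (GenContFract.of η).partDens.get? (j - 1) =
        (GenContFract.of η).partDens.get? (n - j)}) → g.nums (m+1) = g.dens m := by
    intro m hm
    obtain ⟨-, hm⟩ := hm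
    have hbpal : ∀ i < m+1, b i = b (m+1-1-i) := by
      intro i hi
      have := hm (i+1) (Nat.le_add_left 1 i) hi
      simp only [Nat.add_sub_cancel] at this
      rw [hbd i, hbd (m+1-(i+1))] at this
      have h2 : m+1-(i+1) = m+1-1-i := by omega
      rw [h2] at this
      exact Option.some.inj this
    have hrev : ((List.range (m+1)).map b).reverse = (List.range (m+1)).map b := by
      apply List.ext_getElem
      · simp
      · intro i hl1 hl2
        simp only [List.length_reverse, List.length_map, List.length_range] at hl1
        rw [List.getElem_reverse]
        simp only [List.getElem_map, List.getElem_range, List.length_map, List.length_range]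
        exact (hbpal i hl1).symm
    have hsym : (cfProd ((List.range (m+1)).map b))ᵀ = cfProd ((List.range (m+1)).map b) := by
      rw [cfProd_reverse, hrev]
    rw [hmat m] at hsym
    have := congrFun (congrFun hsym 0) 1
    simpa [Matrix.transpose_apply] using this
  -- choose the threshold for the rpow estimate
  have hC : ∃ C : ℝ, 0 ≤ C ∧ ∀ x : ℝ, C ≤ x → (2:ℝ) ≤ x ^ ε := by
    refine ⟨(2:ℝ) ^ (1/ε), by positivity, fun x hx => ?_⟩
    have hc0 : (0:ℝ) < (2:ℝ) ^ (1/ε) := by positivity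
    calc (2:ℝ) = ((2:ℝ) ^ (1/ε)) ^ ε := by
          rw [← Real.rpow_mul (by norm_num), one_div, inv_mul_cancel₀ hε.ne', Real.rpow_one]
      _ ≤ x ^ ε := Real.rpow_le_rpow hc0.le hx hε.le
  obtain ⟨C, hC0, hC2⟩ := hC
  obtain ⟨k, hk⟩ := exists_nat_ge C
  -- main claim: for each palindromic index n large enough we get a good q
  apply Set.infinite_of_not_bddAbove
  rintro ⟨N, hN⟩
  obtain ⟨n, hnmem, hngt⟩ := hpal.exists_gt (max (max N k) 5)
  obtain ⟨m, rfl⟩ : ∃ m, n = m + 1 := ⟨n - 1, by omega⟩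
  -- the denominator q
  obtain ⟨⟨zPm, hzPm⟩, -, ⟨zP, hzP⟩, ⟨zD, hzD⟩⟩ := hint m
  have hDfib : ((m+2 : ℕ) : ℝ) ≤ g.dens (m+1) := by
    refine le_trans ?_ (hfib (m+1))
    exact_mod_cast Nat.le_fib_self (by omega)
  have hzDpos : 0 < zD := by
    have : (0:ℝ) < (zD : ℝ) := by rw [← hzD]; exact hdpos (m+1)
    exact_mod_cast this
  set Q : ℕ := zD.toNat with hQ
  have hQcast : (Q : ℝ) = g.dens (m+1) := by
    rw [hQ, hzD, ← Int.cast_natCast, Int.toNat_of_nonneg hzDpos.le]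
  have hQ1 : 1 ≤ Q := by
    have : (1:ℝ) ≤ (Q:ℝ) := by rw [hQcast]; exact hd1' (m+1)
    exact_mod_cast this
  have hQN : N < Q := by
    have : ((N:ℝ)) < (Q:ℝ) := by
      rw [hQcast]
      calc (N:ℝ) < ((m+2:ℕ):ℝ) := by exact_mod_cast (by omega : N < m + 2)
        _ ≤ g.dens (m+1) := hDfib
    exact_mod_cast this
  -- the two approximation bounds
  have hP : g.nums (m+1) = g.dens m := hpalkey m hnmem
  have hmono : g.dens (m+1) ≤ g.dens (m+2) := GenContFract.of_den_mono
  have hbound1 : |g.dens (m+1) * η - (zP:ℝ)| ≤ 1 / g.dens (m+1) := by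
    rw [← hzP]
    calc |g.dens (m+1) * η - g.nums (m+1)| ≤ 1 / g.dens (m+2) := happrox (m+1)
      _ ≤ 1 / g.dens (m+1) := one_div_le_one_div_of_le (hdpos (m+1)) hmono
  have hbound0 : |g.dens m * η - (zPm:ℝ)| ≤ 1 / g.dens (m+1) := by
    rw [← hzPm]; exact happrox m
  have hηabs : |η| ≤ 1 := by rw [abs_of_pos h0]; exact h1.le
  have hbound2 : |g.dens (m+1) * η^2 - (zPm:ℝ)| ≤ 2 / g.dens (m+1) := by
    have hiden : g.dens (m+1) * η^2 - (zPm:ℝ)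
        = η * (g.dens (m+1) * η - (zP:ℝ)) + (g.dens m * η - (zPm:ℝ)) := by
      rw [← hzP, hP]; ring
    rw [hiden]
    calc |η * (g.dens (m+1) * η - (zP:ℝ)) + (g.dens m * η - (zPm:ℝ))|
        ≤ |η * (g.dens (m+1) * η - (zP:ℝ))| + |g.dens m * η - (zPm:ℝ)| := abs_add_le _ _
      _ ≤ 1 * (1 / g.dens (m+1)) + 1 / g.dens (m+1) := by
          refine add_le_add ?_ hbound0
          rw [abs_mul]
          exact mul_le_mul hηabs hbound1 (abs_nonneg _) one_pos.le
      _ = 2 / g.dens (m+1) := by ring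
  -- conclude membership
  refine absurd (hN ?_) (by omega : ¬ Q ≤ N)
  refine ⟨hQ1, ?_⟩
  have hQpos : (0:ℝ) < Q := by exact_mod_cast hQ1
  have h2Q : (2:ℝ) ≤ (Q:ℝ) ^ ε := by
    apply hC2
    calc C ≤ (k:ℝ) := hk
      _ ≤ (Q:ℝ) := by
          rw [hQcast]
          calc (k:ℝ) ≤ ((m+2:ℕ):ℝ) := by exact_mod_cast (by omega : k ≤ m + 2)
            _ ≤ g.dens (m+1) := hDfib
  have hrpow : 2 / (Q:ℝ) ≤ (Q:ℝ) ^ (-1 + ε) := by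
    rw [Real.rpow_add hQpos, Real.rpow_neg_one, div_eq_mul_inv, mul_comm]
    exact mul_le_mul_of_nonneg_left h2Q (by positivity)
  refine le_trans (max_le ?_ ?_) hrpow
  · calc |(Q:ℝ) * η - round ((Q:ℝ) * η)| ≤ |(Q:ℝ) * η - (zP:ℝ)| := round_le _ _
      _ ≤ 1 / (Q:ℝ) := by rw [hQcast]; exact hbound1
      _ ≤ 2 / (Q:ℝ) := by gcongr <;> norm_num
  · calc |(Q:ℝ) * η^2 - round ((Q:ℝ) * η^2)| ≤ |(Q:ℝ) * η^2 - (zPm:ℝ)| := round_le _ _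
      _ ≤ 2 / (Q:ℝ) := by rw [hQcast]; exact hbound2
end

section
/- Let ξ be a transcendental real number and suppose λ̂₂(ξ) > 1/2. Then λ₂(ξ) ≤ 1. Here λ₂(ξ) (resp. λ̂₂(ξ)) is the supremum of λ such that the system 0 < |x₀| ≤ X, |x₀ξ − x₁| ≤ X^{−λ}, |x₀ξ² − x₂| ≤ X^{−λ} has an integer solution for arbitrarily large X (resp. for all sufficiently large X). -/
/-!
If `l > 1` is attained for arbitrarily large `X`, the Hankel determinant `x₁² - x₀x₂` of a
solution is an integer of absolute value `≪ X^(1-l) < 1`, so it vanishes and the solution is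
`s • (q², qp, p²)` with `q, p` coprime. This gives arbitrarily large `q` with
`|qξ - p| ≤ q^(-2l)`. For such `q`, a uniform solution `y` at `X = q^θ` with `1/λ̂₂ < θ < 2`
makes the integers `q y₁ - p y₀` and `p y₁ - q y₂` smaller than `1` in absolute value, hence
zero; coprimality then forces `q² ∣ y₀`, contradicting `0 < |y₀| ≤ q^θ < q²`.
-/

/-- The system `0 < |x₀| ≤ X`, `|x₀ξ - x₁| ≤ X^(-l)`, `|x₀ξ² - x₂| ≤ X^(-l)` has an
integer solution. -/
def SimulSol (ξ X l : ℝ) : Prop :=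
  ∃ x₀ x₁ x₂ : ℤ, x₀ ≠ 0 ∧ (|x₀| : ℝ) ≤ X ∧
    |(x₀ : ℝ) * ξ - x₁| ≤ X ^ (-l) ∧ |(x₀ : ℝ) * ξ ^ 2 - x₂| ≤ X ^ (-l)

open Filter Real Topology

theorem Int.eq_of_abs_cast_sub_lt_one {a b : ℤ} (h : |(a : ℝ) - b| < 1) : a = b := by
  rw [← sub_eq_zero, ← Int.abs_lt_one_iff]
  exact_mod_cast h

theorem Int.exists_eq_geometric_of_sq_eq_mul {x₀ x₁ x₂ : ℤ} (hx₀ : x₀ ≠ 0)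
    (h : x₁ ^ 2 = x₀ * x₂) :
    ∃ q p s : ℤ, 0 < q ∧ IsCoprime q p ∧ x₀ = s * q ^ 2 ∧ x₁ = s * q * p ∧ x₂ = s * p ^ 2 := by
  obtain ⟨g, u, v, hg, huv, rfl, rfl⟩ := Int.exists_gcd_one' (Int.gcd_pos_of_ne_zero_left x₁ hx₀)
  have hcop : IsCoprime u v := Int.isCoprime_iff_gcd_eq_one.mpr huv
  have hg0 : (g : ℤ) ≠ 0 := by positivity
  have hu : u ≠ 0 := left_ne_zero_of_mul hx₀
  have hgv : u * x₂ = g * v ^ 2 := mul_left_cancel₀ hg0 (by linear_combination -h)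
  obtain ⟨s, hs⟩ : u ∣ g := (hcop.pow_right (n := 2)).dvd_of_dvd_mul_right ⟨x₂, hgv.symm⟩
  have hx₂ : x₂ = s * v ^ 2 := mul_left_cancel₀ hu (by rw [hgv, hs]; ring)
  rcases hu.lt_or_gt with hneg | hpos
  · exact ⟨-u, -v, s, by omega, hcop.neg_neg, by rw [hs]; ring, by rw [hs]; ring,
      hx₂.trans (by ring)⟩
  · exact ⟨u, v, s, hpos, hcop, by rw [hs]; ring, by rw [hs]; ring, hx₂⟩

theorem IsCoprime.sq_dvd_of_mul_eq_mul {R : Type*} [CommRing R] {q p y₀ y₁ y₂ : R}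
    (hqp : IsCoprime q p) (h₁ : q * y₁ = p * y₀) (h₂ : p * y₁ = q * y₂) : q ^ 2 ∣ y₀ :=
  (hqp.pow (m := 2) (n := 2)).dvd_of_dvd_mul_left ⟨y₂, by linear_combination q * h₂ - p * h₁⟩

theorem sq_eq_mul_of_abs_sub_le {ξ X E : ℝ} {x₀ x₁ x₂ : ℤ} (h₀ : |(x₀ : ℝ)| ≤ X)
    (h₁ : |x₀ * ξ - x₁| ≤ E) (h₂ : |x₀ * ξ ^ 2 - x₂| ≤ E) (hEX : E ≤ X)
    (hsmall : (2 * |ξ| + 2) * (X * E) < 1) : x₁ ^ 2 = x₀ * x₂ := by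
  apply Int.eq_of_abs_cast_sub_lt_one
  have hE : 0 ≤ E := (abs_nonneg _).trans h₁
  have hsum : |(x₀ : ℝ) * ξ + x₁| ≤ (2 * |ξ| + 1) * X :=
    calc |(x₀ : ℝ) * ξ + x₁| = |2 * (x₀ * ξ) - (x₀ * ξ - x₁)| := by ring_nf
      _ ≤ 2 * (|(x₀ : ℝ)| * |ξ|) + E := by
        grw [abs_sub, abs_mul, abs_mul, abs_two, h₁]
      _ ≤ (2 * |ξ| + 1) * X := by nlinarith [abs_nonneg ξ]
  calc |((x₁ ^ 2 : ℤ) : ℝ) - (x₀ * x₂ : ℤ)|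
      = |x₀ * (x₀ * ξ ^ 2 - x₂) - (x₀ * ξ + x₁) * (x₀ * ξ - x₁)| := by push_cast; ring_nf
    _ ≤ X * E + (2 * |ξ| + 1) * X * E := by
      grw [abs_sub, abs_mul, abs_mul, h₀, h₂, hsum, h₁]
      all_goals nlinarith [abs_nonneg ξ, abs_nonneg (x₀ : ℝ)]
    _ < 1 := by linarith

theorem exists_coprime_approx_of_sq_eq_mul {ξ X E : ℝ} {x₀ x₁ x₂ : ℤ} (hx₀ : x₀ ≠ 0)
    (hX : |(x₀ : ℝ)| ≤ X) (hE : |x₀ * ξ - x₁| ≤ E) (hD : x₁ ^ 2 = x₀ * x₂) :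
    ∃ q p : ℤ, 0 < q ∧ IsCoprime q p ∧ (q : ℝ) ^ 2 ≤ X ∧ |q * ξ - p| ≤ E := by
  obtain ⟨q, p, s, hq, hqp, rfl, rfl, -⟩ := Int.exists_eq_geometric_of_sq_eq_mul hx₀ hD
  have hs : (1 : ℝ) ≤ |(s : ℝ)| := by exact_mod_cast Int.one_le_abs (left_ne_zero_of_mul hx₀)
  have hq1 : (1 : ℝ) ≤ q := by exact_mod_cast hq
  refine ⟨q, p, hq, hqp, ?_, ?_⟩
  · calc (q : ℝ) ^ 2 ≤ |(s : ℝ)| * q ^ 2 := le_mul_of_one_le_left (by positivity) hs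
      _ = _ := by push_cast; rw [abs_mul, abs_of_nonneg (by positivity : (0 : ℝ) ≤ q ^ 2)]
      _ ≤ X := hX
  · have hid : ((s * q ^ 2 : ℤ) : ℝ) * ξ - (s * q * p : ℤ) = (s * q) * (q * ξ - p) := by
      push_cast; ring
    rw [hid, abs_mul, abs_mul, abs_of_pos (by positivity : (0 : ℝ) < q)] at hE
    calc |q * ξ - p| ≤ |(s : ℝ)| * q * |q * ξ - p| :=
          le_mul_of_one_le_left (abs_nonneg _) (by nlinarith)
      _ ≤ E := hE

theorem mul_eq_mul_of_abs_sub_le {ξ Y F δ : ℝ} {q p y₀ y₁ y₂ : ℤ} (hY : |(y₀ : ℝ)| ≤ Y)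
    (h₁ : |y₀ * ξ - y₁| ≤ F) (h₂ : |y₀ * ξ ^ 2 - y₂| ≤ F) (hδ : |q * ξ - p| ≤ δ)
    (hsmall : (|(p : ℝ)| + |(q : ℝ)|) * F + (|ξ| + 1) * (Y * δ) < 1) :
    q * y₁ = p * y₀ ∧ p * y₁ = q * y₂ := by
  have hF : 0 ≤ F := (abs_nonneg _).trans h₁
  have hY0 : 0 ≤ Y := (abs_nonneg _).trans hY
  have hYδ : 0 ≤ Y * δ := mul_nonneg hY0 ((abs_nonneg _).trans hδ)
  constructor <;> apply Int.eq_of_abs_cast_sub_lt_one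
  · calc |((q * y₁ : ℤ) : ℝ) - (p * y₀ : ℤ)| = |y₀ * (q * ξ - p) - q * (y₀ * ξ - y₁)| := by
          push_cast; ring_nf
      _ ≤ Y * δ + |(q : ℝ)| * F := by
          grw [abs_sub, abs_mul, abs_mul, hY, hδ, h₁]
      _ < 1 := by nlinarith [abs_nonneg (p : ℝ), abs_nonneg ξ]
  · calc |((p * y₁ : ℤ) : ℝ) - (q * y₂ : ℤ)|
          = |q * (y₀ * ξ ^ 2 - y₂) - p * (y₀ * ξ - y₁) - y₀ * ξ * (q * ξ - p)| := by
          push_cast; ring_nf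
      _ ≤ |(q : ℝ)| * F + |(p : ℝ)| * F + Y * |ξ| * δ := by
          grw [abs_sub, abs_sub, abs_mul, abs_mul, abs_mul, abs_mul, hY, hδ, h₁, h₂]
      _ < 1 := by nlinarith [abs_nonneg ξ]

theorem tendsto_rpow_mul_rpow_neg_atTop {a b : ℝ} (h : a < b) :
    Tendsto (fun x : ℝ ↦ x ^ a * x ^ (-b)) atTop (𝓝 0) :=
  (tendsto_rpow_neg_atTop (sub_pos.2 h)).congr' <| (eventually_gt_atTop 0).mono fun x hx ↦ by
    simp only [← rpow_add hx]; ring_nf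

theorem frequently_exists_coprime_approx {ξ l : ℝ} (hξ : Irrational ξ) (hl : 1 < l)
    (h : ∃ᶠ X in atTop, SimulSol ξ X l) :
    ∃ᶠ q : ℤ in atTop, ∃ p : ℤ, IsCoprime q p ∧ |q * ξ - p| ≤ (q : ℝ) ^ (-(2 * l)) := by
  refine frequently_atTop.2 fun Q ↦ ?_
  have hdist : ∀ n ∈ Finset.Icc 1 Q, 0 < |(n : ℝ) * ξ - round ((n : ℝ) * ξ)| := fun n hn ↦
    abs_pos.2 <| sub_ne_zero.2 <|
      (hξ.intCast_mul (by rw [Finset.mem_Icc] at hn; omega)).ne_int _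
  have hhankel : Tendsto (fun X : ℝ ↦ (2 * |ξ| + 2) * (X * X ^ (-l))) atTop (𝓝 0) := by
    simpa using (tendsto_rpow_mul_rpow_neg_atTop hl).const_mul (2 * |ξ| + 2)
  have hlarge : ∀ᶠ X in atTop, 1 ≤ X ∧ (2 * |ξ| + 2) * (X * X ^ (-l)) < 1 ∧
      ∀ n ∈ Finset.Icc 1 Q, X ^ (-l) < |(n : ℝ) * ξ - round ((n : ℝ) * ξ)| :=
    (eventually_ge_atTop 1).and <| (hhankel.eventually_lt_const one_pos).and <|
      (eventually_all_finset _).2 fun n hn ↦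
        (tendsto_rpow_neg_atTop (by linarith)).eventually_lt_const (hdist n hn)
  obtain ⟨X, ⟨x₀, x₁, x₂, hx₀, hX, h₁, h₂⟩, hX1, hXE, hQ⟩ := (h.and_eventually hlarge).exists
  have hEX : X ^ (-l) ≤ X := (rpow_le_one_of_one_le_of_nonpos hX1 (by linarith)).trans hX1
  obtain ⟨q, p, hq, hqp, hqX, hqp'⟩ := exists_coprime_approx_of_sq_eq_mul hx₀ hX h₁
    (sq_eq_mul_of_abs_sub_le hX h₁ h₂ hEX hXE)
  refine ⟨q, ?_, p, hqp, hqp'.trans ?_⟩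
  · by_contra! hqQ
    linarith [hQ q (Finset.mem_Icc.2 ⟨hq, hqQ.le⟩), round_le ((q : ℝ) * ξ) p]
  · calc X ^ (-l) ≤ ((q : ℝ) ^ 2) ^ (-l) :=
          rpow_le_rpow_of_nonpos (by positivity) hqX (by linarith)
      _ = (q : ℝ) ^ (-(2 * l)) := by rw [← rpow_natCast_mul (by positivity)]; ring_nf

theorem eventually_not_simulSol_rpow {ξ m θ l : ℝ} (hθm : 1 < θ * m) (hθ : θ < 2)
    (hl : 1 ≤ l) :
    ∀ᶠ q : ℤ in atTop, ∀ p : ℤ, IsCoprime q p → |q * ξ - p| ≤ (q : ℝ) ^ (-(2 * l)) →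
      ¬ SimulSol ξ ((q : ℝ) ^ θ) m := by
  have hsmall : Tendsto (fun x : ℝ ↦ (|ξ| + 2) * (x ^ (1 : ℝ) * x ^ (-(θ * m))) +
      (|ξ| + 1) * (x ^ θ * x ^ (-(2 * l)))) atTop (𝓝 0) := by
    simpa using ((tendsto_rpow_mul_rpow_neg_atTop hθm).const_mul (|ξ| + 2)).add
      ((tendsto_rpow_mul_rpow_neg_atTop (by linarith)).const_mul (|ξ| + 1))
  filter_upwards [eventually_gt_atTop 1,
    (hsmall.comp tendsto_intCast_atTop_atTop).eventually_lt_const one_pos]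
    with q hq hq_small p hqp hδ ⟨y₀, y₁, y₂, hy₀, hY, h₁, h₂⟩
  have hq : (1 : ℝ) < q := by exact_mod_cast hq
  rw [← rpow_mul (by positivity), mul_neg] at h₁ h₂
  have hp : |(p : ℝ)| ≤ (|ξ| + 1) * q := by
    have hδ1 : (q : ℝ) ^ (-(2 * l)) ≤ 1 := rpow_le_one_of_one_le_of_nonpos hq.le (by linarith)
    calc |(p : ℝ)| = |q * ξ - (q * ξ - p)| := by ring_nf
      _ ≤ q * |ξ| + 1 := by
        grw [abs_sub, abs_mul, abs_of_pos (by positivity : (0 : ℝ) < q), hδ, hδ1]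
      _ ≤ (|ξ| + 1) * q := by linarith
  obtain ⟨hy₁, hy₂⟩ := mul_eq_mul_of_abs_sub_le hY h₁ h₂ hδ <| by
    rw [abs_of_pos (by positivity : (0 : ℝ) < q)]
    refine lt_of_le_of_lt ?_ hq_small
    simp only [Function.comp, rpow_one]
    have hF : 0 ≤ (q : ℝ) ^ (-(θ * m)) := by positivity
    nlinarith
  have hy₀_ge : (q : ℝ) ^ 2 ≤ |(y₀ : ℝ)| := by
    have hdvd := hqp.sq_dvd_of_mul_eq_mul hy₁ hy₂
    exact_mod_cast Int.le_of_dvd (abs_pos.2 hy₀) ((dvd_abs _ _).2 hdvd)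
  have hqθ : (q : ℝ) ^ θ < (q : ℝ) ^ 2 := by
    exact_mod_cast rpow_lt_rpow_of_exponent_lt hq hθ
  linarith

/-- If `ξ` is transcendental and `λ̂₂(ξ) > 1/2` (some exponent `l > 1/2` is uniformly
attained), then `λ₂(ξ) ≤ 1` (no exponent `l > 1` is attained for arbitrarily large `X`). -/
theorem lambda_two_le_one_of_uniform (ξ : ℝ) (hξ : Transcendental ℚ ξ)
    (h : ∃ l : ℝ, 1 / 2 < l ∧ ∃ X₀ : ℝ, ∀ X : ℝ, X₀ ≤ X → SimulSol ξ X l) :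
    ∀ l : ℝ, 1 < l → ¬ (∀ X₀ : ℝ, ∃ X : ℝ, X₀ ≤ X ∧ SimulSol ξ X l) := by
  obtain ⟨m, hm, X₀, hunif⟩ := h
  intro l hl hfreq
  -- any `θ` with `1/m < θ < 2` works
  obtain ⟨θ, hθ0, hθm, hθ⟩ : ∃ θ : ℝ, 0 < θ ∧ 1 < θ * m ∧ θ < 2 := by
    have h2m : 1 < 2 * m := by linarith
    refine ⟨1 + 1 / (2 * m), by positivity, by field_simp; linarith, ?_⟩
    linarith [(div_lt_one (by linarith : (0 : ℝ) < 2 * m)).2 h2m]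
  have happrox := frequently_exists_coprime_approx hξ.irrational hl (frequently_atTop.2 hfreq)
  have hX₀ : ∀ᶠ q : ℤ in atTop, X₀ ≤ (q : ℝ) ^ θ :=
    ((tendsto_rpow_atTop hθ0).comp tendsto_intCast_atTop_atTop).eventually_ge_atTop X₀
  obtain ⟨q, ⟨p, hqp, hδ⟩, hnot, hq⟩ :=
    (happrox.and_eventually ((eventually_not_simulSol_rpow hθm hθ hl.le).and hX₀)).exists
  exact hnot p hqp hδ (hunif _ hq)
end

section
/- For any n×m real matrix A, ω_{n,m}(A) ≥ (m·ω_{m,n}(ᵗA) + m − 1) / ((n − 1)·ω_{m,n}(ᵗA) + n). -/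
open scoped ENNReal
open Matrix

/-- Distance from a real number to the nearest integer. -/
noncomputable def nearInt (t : ℝ) : ℝ := |t - round t|

/-- The system `‖Ax‖ ≤ X^(-w)`, `|x| ≤ X` has a nonzero integer solution `x ∈ ℤᵐ`. -/
def MatSol {n m : ℕ} (A : Matrix (Fin n) (Fin m) ℝ) (X w : ℝ) : Prop :=
  ∃ x : Fin m → ℤ, x ≠ 0 ∧ (∀ j, (|x j| : ℝ) ≤ X) ∧
    ∀ i, nearInt (∑ j, A i j * x j) ≤ X ^ (-w)

/-- The ordinary exponent `ω_{n,m}(A)`: supremum of the `w` for which the system has a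
nonzero solution for arbitrarily large `X`. -/
noncomputable def oexp {n m : ℕ} (A : Matrix (Fin n) (Fin m) ℝ) : ℝ≥0∞ :=
  sSup {w : ℝ≥0∞ | ∃ r : ℝ, w = ENNReal.ofReal r ∧
    ∀ X₀ : ℝ, ∃ X : ℝ, X₀ ≤ X ∧ MatSol A X r}

/-- The uniform exponent `ŵ_{n,m}(A)`: supremum of the `w` for which the system has a
nonzero solution for all sufficiently large `X`. -/
noncomputable def uexp {n m : ℕ} (A : Matrix (Fin n) (Fin m) ℝ) : ℝ≥0∞ :=
  sSup {w : ℝ≥0∞ | ∃ r : ℝ, w = ENNReal.ofReal r ∧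
    ∃ X₀ : ℝ, ∀ X : ℝ, X₀ ≤ X → MatSol A X r}

/-!
Let `y ∈ ℤⁿ` be nonzero with `‖ᵗA y‖ ≤ U`, let `Y = |y_{i₀}|` be its largest coordinate and `p`
the integer point nearest to `ᵗA y`. The `m + n` linear forms `x`, `Aᵢx - zᵢ` (`i ≠ i₀`) and
`p·x - y·z` in `(x, z) ∈ ℤᵐ⁺ⁿ` have determinant `±y_{i₀}`, so by Minkowski there is `(x, z) ≠ 0`
with `|x| < X`, `|Aᵢx - zᵢ| < V` and `p·x = y·z` as soon as `Y < Xᵐ Vⁿ⁻¹`. The identity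
`∑ yᵢ (Aᵢx - zᵢ) = (ᵗA y - p)·x` then controls the missing form: `‖Ax‖ ≤ mUX/Y + nV`. With
`U = Y^(-r)`, `X = Y^α`, `V = Y^(-β)` and `α + β = 1 + r` this is a solution of exponent `w` for
every `w < (mr + m - 1)/((n - 1)r + n)`.

Such `y` exist with `Y` arbitrarily large: if `ᵗA y ∈ ℤᵐ` for some `y ≠ 0`, its multiples do;
otherwise the solutions of the transposed system for growing `X` cannot stay in a finite set.
-/

open Filter Topology

theorem nearInt_nonneg (t : ℝ) : 0 ≤ nearInt t := abs_nonneg _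

theorem nearInt_intCast (k : ℤ) : nearInt k = 0 := by simp [nearInt]

theorem MatSol.one_le {n m : ℕ} {A : Matrix (Fin n) (Fin m) ℝ} {X w : ℝ} (h : MatSol A X w) :
    1 ≤ X := by
  obtain ⟨x, hx0, hxX, -⟩ := h
  obtain ⟨j, hj⟩ := Function.ne_iff.1 hx0
  exact le_trans (by exact_mod_cast Int.one_le_abs hj) (hxX j)

theorem MatSol.mono {n m : ℕ} {A : Matrix (Fin n) (Fin m) ℝ} {X w w' : ℝ} (h : MatSol A X w)
    (hw : w' ≤ w) : MatSol A X w' :=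
  let ⟨x, hx0, hxX, hxA⟩ := h
  ⟨x, hx0, hxX, fun i => (hxA i).trans (Real.rpow_le_rpow_of_exponent_le h.one_le (neg_le_neg hw))⟩

theorem Int.eq_zero_of_abs_cast_lt_one {k : ℤ} (h : |(k : ℝ)| < 1) : k = 0 :=
  Int.abs_lt_one_iff.1 (by exact_mod_cast h)

theorem eq_zero_of_dotProduct_eq_zero {ι : Type*} [Fintype ι] [DecidableEq ι] {y z : ι → ℤ}
    {i₀ : ι} (hy : y i₀ ≠ 0) (hz : ∀ i ≠ i₀, z i = 0) (hyz : y ⬝ᵥ z = 0) : z = 0 := by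
  have h : y ⬝ᵥ z = y i₀ * z i₀ :=
    Finset.sum_eq_single i₀ (fun i _ hi => by simp [hz i hi]) (by simp)
  funext i
  rcases eq_or_ne i i₀ with rfl | hi
  · exact (mul_eq_zero.1 (h ▸ hyz)).resolve_left hy
  · exact hz i hi

theorem exists_norm_eq_norm_apply {ι E : Type*} [Fintype ι] [Nonempty ι] [SeminormedAddGroup E]
    (f : ι → E) : ∃ i, ‖f‖ = ‖f i‖ := by
  obtain ⟨i, -, hi⟩ := Finset.exists_mem_eq_sup Finset.univ Finset.univ_nonempty fun b => ‖f b‖₊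
  exact ⟨i, congrArg NNReal.toReal ((Pi.nnnorm_def f).trans hi)⟩

theorem abs_mul_le_abs_dotProduct_add {ι : Type*} [Fintype ι] [DecidableEq ι] {y e : ι → ℝ}
    {i₀ : ι} {Y V : ℝ} (hy : ∀ i, |y i| ≤ Y) (he : ∀ i ≠ i₀, |e i| ≤ V) (hV : 0 ≤ V) :
    |y i₀ * e i₀| ≤ |y ⬝ᵥ e| + Fintype.card ι * (Y * V) := by
  have hsplit : y i₀ * e i₀ = y ⬝ᵥ e - ∑ i ∈ Finset.univ.erase i₀, y i * e i :=
    eq_sub_of_add_eq (Finset.add_sum_erase _ (fun i => y i * e i) (Finset.mem_univ i₀))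
  have hY : 0 ≤ Y := (abs_nonneg _).trans (hy i₀)
  calc |y i₀ * e i₀| ≤ |y ⬝ᵥ e| + ∑ i ∈ Finset.univ.erase i₀, |y i * e i| :=
        hsplit ▸ (abs_sub _ _).trans (add_le_add_right (Finset.abs_sum_le_sum_abs _ _) _)
    _ ≤ |y ⬝ᵥ e| + ∑ _i : ι, Y * V := by
        gcongr
        refine (Finset.sum_le_sum fun i hi => ?_).trans (Finset.sum_le_sum_of_subset_of_nonneg
          (Finset.erase_subset _ _) fun _ _ _ => by positivity)
        rw [abs_mul]
        exact mul_le_mul (hy i) (he i (Finset.ne_of_mem_erase hi)) (abs_nonneg _) hY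
    _ = |y ⬝ᵥ e| + Fintype.card ι * (Y * V) := by simp

theorem Matrix.det_one_updateRow {ι R : Type*} [Fintype ι] [DecidableEq ι] [CommRing R] (i : ι)
    (v : ι → R) : ((1 : Matrix ι ι R).updateRow i v).det = v i := by
  rw [← transpose_one, updateRow_transpose, det_transpose, ← cramer_apply, cramer_one]
  rfl

open MeasureTheory in
theorem exists_ne_zero_int_abs_mulVec_lt {ι : Type*} [Fintype ι] [DecidableEq ι]
    (T : Matrix ι ι ℝ) (hT : T.det ≠ 0) {c : ι → ℝ} (hc : ∀ i, 0 < c i)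
    (h : |T.det| < ∏ i, c i) :
    ∃ v : ι → ℤ, v ≠ 0 ∧ ∀ i, |(T *ᵥ (Int.cast ∘ v)) i| < c i := by
  let b := Pi.basisFun ℝ ι
  let L := (Submodule.span ℤ (Set.range b)).toAddSubgroup
  have : Countable L := inferInstanceAs (Countable (Submodule.span ℤ (Set.range b)))
  let s : Set (ι → ℝ) := Matrix.toLin' T ⁻¹' Set.univ.pi fun i => Set.Ioo (-c i) (c i)
  have hF : volume (ZSpan.fundamentalDomain b) = 1 := by
    rw [ZSpan.fundamentalDomain_pi_basisFun, volume_pi_pi]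
    simp
  have hvol : volume (ZSpan.fundamentalDomain b) * 2 ^ Module.finrank ℝ (ι → ℝ) < volume s := by
    have hdet : 0 < |T.det| := abs_pos.2 hT
    have hc2 : ∀ i ∈ Finset.univ, 0 ≤ 2 * c i := fun i _ => by linarith [hc i]
    rw [Measure.addHaar_preimage_linearMap _ (by rwa [LinearMap.det_toLin']), volume_pi_pi,
      LinearMap.det_toLin', hF, one_mul, Module.finrank_fintype_fun_eq_card]
    simp only [Real.volume_Ioo, sub_neg_eq_add, ← two_mul]
    rw [← ENNReal.ofReal_prod_of_nonneg hc2, ← ENNReal.ofReal_mul (by positivity),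
      ← ENNReal.ofReal_ofNat, ← ENNReal.ofReal_pow zero_le_two, abs_inv,
      ENNReal.ofReal_lt_ofReal_iff (mul_pos (inv_pos.2 hdet) (Finset.prod_pos fun i _ => by
        linarith [hc i])), Finset.prod_mul_distrib, Finset.prod_const, Finset.card_univ,
      inv_mul_eq_div, lt_div_iff₀ hdet]
    gcongr
  obtain ⟨⟨x, hxL⟩, hx0, hxs⟩ := exists_ne_zero_mem_lattice_of_measure_mul_two_pow_lt_measure
    (L := L) (s := s) (ZSpan.isAddFundamentalDomain' b volume)
    (fun x hx i _ => by simpa [Matrix.mulVec_neg, neg_lt, and_comm] using hx i trivial)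
    ((convex_pi fun i _ => convex_Ioo _ _).linear_preimage _) hvol
  have hint : ∀ i, ∃ k : ℤ, (k : ℝ) = x i := fun i => (b.mem_span_iff_repr_mem ℤ x).mp hxL i
  choose v hv using hint
  obtain rfl : x = Int.cast ∘ v := funext fun i => (hv i).symm
  refine ⟨v, fun h => hx0 ?_, fun i => abs_lt.2 ?_⟩
  · simp [h]
  · simpa [and_comm] using hxs i trivial

section DysonMatrix

variable {ι κ R : Type*} [Fintype ι] [Fintype κ] [DecidableEq ι] [DecidableEq κ] [CommRing R]

def dysonMatrix (A : Matrix ι κ R) (i₀ : ι) (p : κ → R) (y : ι → R) :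
    Matrix (κ ⊕ ι) (κ ⊕ ι) R :=
  fromBlocks 1 0 (A.updateRow i₀ p) (-(1 : Matrix ι ι R).updateRow i₀ y)

theorem dysonMatrix_mulVec (A : Matrix ι κ R) (i₀ : ι) (p : κ → R) (y : ι → R) (x : κ → R)
    (z : ι → R) : dysonMatrix A i₀ p y *ᵥ Sum.elim x z =
      Sum.elim x (Function.update (A *ᵥ x - z) i₀ (p ⬝ᵥ x - y ⬝ᵥ z)) := by
  rw [dysonMatrix, fromBlocks_mulVec, neg_mulVec, updateRow_mulVec, updateRow_mulVec, one_mulVec,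
    one_mulVec, zero_mulVec, add_zero, ← sub_eq_add_neg, ← Function.update_sub]
  rfl

theorem det_dysonMatrix (A : Matrix ι κ R) (i₀ : ι) (p : κ → R) (y : ι → R) :
    (dysonMatrix A i₀ p y).det = (-1) ^ Fintype.card ι * y i₀ := by
  rw [dysonMatrix, det_fromBlocks_zero₁₂, det_one, one_mul, det_neg, det_one_updateRow]

end DysonMatrix

theorem exists_dyson_point {n m : ℕ} (A : Matrix (Fin n) (Fin m) ℝ) {y : Fin n → ℤ} {i₀ : Fin n}
    (hy : y i₀ ≠ 0) (p : Fin m → ℤ) {X V : ℝ} (hX : 0 < X) (hV : 0 < V) (hV1 : V ≤ 1)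
    (hvol : |(y i₀ : ℝ)| < X ^ m * V ^ (n - 1)) :
    ∃ (x : Fin m → ℤ) (z : Fin n → ℤ), x ≠ 0 ∧ (∀ j, |(x j : ℝ)| < X) ∧
      (∀ i ≠ i₀, |(A *ᵥ (Int.cast ∘ x)) i - z i| < V) ∧ p ⬝ᵥ x = y ⬝ᵥ z := by
  let c : Fin m ⊕ Fin n → ℝ := Sum.elim (fun _ => X) (Function.update (fun _ => V) i₀ 1)
  have hc : ∀ k, 0 < c k := by
    rintro (j | i)
    · exact hX
    · simp only [c, Sum.elim_inr, Function.update_apply]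
      split_ifs <;> [exact one_pos; exact hV]
  have hprod : ∏ k, c k = X ^ m * V ^ (n - 1) := by
    simp only [c, Fintype.prod_sum_type, Sum.elim_inl, Sum.elim_inr, Finset.prod_const,
      Finset.card_univ, Fintype.card_fin, Finset.prod_update_of_mem (Finset.mem_univ _)]
    simp [Finset.card_univ_sdiff]
  have hdet := det_dysonMatrix A i₀ (Int.cast ∘ p) (Int.cast ∘ y)
  obtain ⟨v, hv0, hv⟩ := exists_ne_zero_int_abs_mulVec_lt
    (dysonMatrix A i₀ (Int.cast ∘ p) (Int.cast ∘ y)) (by simp [hdet, hy]) hc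
    (by simpa [hdet, hprod] using hvol)
  obtain ⟨x, z, rfl⟩ : ∃ x z, v = Sum.elim x z := ⟨_, _, (Sum.elim_comp_inl_inr v).symm⟩
  simp only [Sum.comp_elim, dysonMatrix_mulVec] at hv
  have hx : ∀ j, |(x j : ℝ)| < X := fun j => hv (Sum.inl j)
  have hz : ∀ i ≠ i₀, |(A *ᵥ (Int.cast ∘ x)) i - z i| < V := fun i hi => by
    simpa only [Sum.elim_inr, Function.update_of_ne hi, Pi.sub_apply, Function.comp_apply, c]
      using hv (Sum.inr i)
  have hxz : p ⬝ᵥ x = y ⬝ᵥ z := by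
    have h := hv (Sum.inr i₀)
    simp only [Sum.elim_inr, Function.update_self, c] at h
    refine sub_eq_zero.1 (Int.eq_zero_of_abs_cast_lt_one ?_)
    rw [Int.cast_sub]
    convert h using 3 <;> exact (Int.castRingHom ℝ).map_dotProduct _ _
  refine ⟨x, z, fun hx0 => hv0 ?_, hx, hz, hxz⟩
  subst hx0
  obtain rfl : z = 0 := eq_zero_of_dotProduct_eq_zero hy
    (fun i hi => Int.eq_zero_of_abs_cast_lt_one (by simpa using (hz i hi).trans_le hV1))
    (by rw [← hxz, dotProduct_zero])
  ext (j | i) <;> rfl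

theorem exists_approx_of_transpose_approx {n m : ℕ} (A : Matrix (Fin n) (Fin m) ℝ)
    {y : Fin n → ℤ} (hy : y ≠ 0) {U X V : ℝ} (hU : ∀ j, nearInt (∑ i, A i j * y i) ≤ U)
    (hX : 0 < X) (hV : 0 < V) (hV1 : V ≤ 1) (hvol : ‖y‖ < X ^ m * V ^ (n - 1)) :
    ∃ x : Fin m → ℤ, x ≠ 0 ∧ (∀ j, |(x j : ℝ)| ≤ X) ∧
      ∀ i, nearInt (∑ j, A i j * x j) ≤ m * U * X / ‖y‖ + n * V := by
  have : Nonempty (Fin n) := let ⟨i, _⟩ := Function.ne_iff.1 hy; ⟨i⟩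
  obtain ⟨i₀, hi₀⟩ := exists_norm_eq_norm_apply y
  rw [Int.norm_eq_abs] at hi₀
  have hY : 0 < ‖y‖ := norm_pos_iff.2 hy
  have hyi₀ : y i₀ ≠ 0 := fun h => hY.ne' (by simpa [h] using hi₀)
  set p : Fin m → ℤ := fun j => round (∑ i, A i j * y i)
  obtain ⟨x, z, hx0, hx, hz, hxz⟩ := exists_dyson_point A hyi₀ p hX hV hV1 (hi₀ ▸ hvol)
  set e : Fin n → ℝ := A *ᵥ (Int.cast ∘ x) - Int.cast ∘ z
  have hxz' : (Int.cast ∘ p) ⬝ᵥ (Int.cast ∘ x) = (Int.cast ∘ y) ⬝ᵥ (Int.cast ∘ z : Fin n → ℝ) := by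
    have := congrArg (Int.castRingHom ℝ) hxz
    rwa [RingHom.map_dotProduct, RingHom.map_dotProduct] at this
  have hdefect : |(Int.cast ∘ y) ⬝ᵥ e| ≤ m * U * X := by
    -- `y · (Ax - z) = (ᵗA y - p) · x` because `p · x = y · z`
    rw [dotProduct_sub, dotProduct_mulVec, ← mulVec_transpose, ← hxz', ← sub_dotProduct]
    calc _ ≤ ∑ j, |(Aᵀ *ᵥ (Int.cast ∘ y) - Int.cast ∘ p : Fin m → ℝ) j * x j| :=
          Finset.abs_sum_le_sum_abs _ _
      _ ≤ ∑ _j : Fin m, U * X := Finset.sum_le_sum fun j _ => by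
          rw [abs_mul]
          exact mul_le_mul (hU j) (hx j).le (abs_nonneg _) ((abs_nonneg _).trans (hU j))
      _ = m * U * X := by simp [mul_assoc]
  have hei₀ : ‖y‖ * |e i₀| ≤ m * U * X + n * (‖y‖ * V) := by
    have := abs_mul_le_abs_dotProduct_add (y := Int.cast ∘ y) (e := e) (i₀ := i₀)
      (fun i => (Int.norm_eq_abs _).symm.trans_le (norm_le_pi_norm y i)) (fun i hi => (hz i hi).le)
      hV.le
    rw [abs_mul, Function.comp_apply, ← hi₀, Fintype.card_fin] at this
    linarith
  refine ⟨x, hx0, fun j => (hx j).le, fun i => (round_le _ (z i)).trans ?_⟩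
  change |e i| ≤ _
  have hUXY : 0 ≤ m * U * X / ‖y‖ := div_nonneg ((abs_nonneg _).trans hdefect) hY.le
  rcases eq_or_ne i i₀ with rfl | hi
  · rw [div_add' _ _ _ hY.ne', le_div_iff₀ hY]; linarith
  · have hn : (1 : ℝ) ≤ n := by exact_mod_cast i.pos
    have hei : |e i| < V := hz i hi
    nlinarith

noncomputable def dysonExponent (n m : ℕ) (r : ℝ) : ℝ := (m * r + m - 1) / ((n - 1) * r + n)

theorem exists_dyson_exponents {n m : ℕ} (hn : 1 ≤ n) {r w : ℝ} (hr : 0 ≤ r) (hw0 : 0 ≤ w)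
    (hw : w < dysonExponent n m r) :
    ∃ α β : ℝ, 0 < α ∧ α + β = 1 + r ∧ w * α < β ∧ 1 < α * m - β * (n - 1) := by
  have hn' : (1 : ℝ) ≤ n := by exact_mod_cast hn
  have hden : 0 < (n - 1) * r + n := by nlinarith
  have hnum : w * ((n - 1) * r + n) < m * r + m - 1 := (lt_div_iff₀ hden).1 hw
  have hd : 0 < (m + n - 1 : ℝ) := by nlinarith
  set a := ((n - 1) * r + n) / (m + n - 1)
  set b := (1 + r) / (1 + w)
  have hab : a < b := by
    rw [div_lt_div_iff₀ hd (by linarith)]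
    nlinarith
  refine ⟨(a + b) / 2, 1 + r - (a + b) / 2, by positivity, by ring, ?_, ?_⟩
  · have := (lt_div_iff₀ (by linarith : (0 : ℝ) < 1 + w)).1 (add_div_two_lt_right.2 hab)
    linarith
  · have := (div_lt_iff₀ hd).1 (left_lt_add_div_two.2 hab)
    nlinarith

def transposeApprox {n m : ℕ} (A : Matrix (Fin n) (Fin m) ℝ) (r : ℝ) : Set (Fin n → ℤ) :=
  {y | y ≠ 0 ∧ ∀ j, nearInt (∑ i, A i j * y i) ≤ ‖y‖ ^ (-r)}

theorem Set.Infinite.exists_mem_norm_of_eventually {E : Type*} [SeminormedAddGroup E]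
    [ProperSpace E] [DiscreteTopology E] {S : Set E} (hS : S.Infinite) {p : ℝ → Prop}
    (hp : ∀ᶠ Y in atTop, p Y) : ∃ y ∈ S, p ‖y‖ := by
  have h : Tendsto (‖·‖) (cofinite : Filter E) atTop := by
    rw [← cocompact_eq_cofinite]; exact tendsto_norm_cocompact_atTop
  exact ((frequently_cofinite_iff_infinite.2 hS).and_eventually (h.eventually hp)).exists

theorem frequently_matSol_of_infinite_transposeApprox {n m : ℕ} (A : Matrix (Fin n) (Fin m) ℝ)
    {r w : ℝ} (hr : 0 ≤ r) (hS : (transposeApprox A r).Infinite) (hw0 : 0 ≤ w)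
    (hw : w < dysonExponent n m r) : ∃ᶠ X in atTop, MatSol A X w := by
  obtain ⟨y, hy, -⟩ := hS.nonempty
  have hn : 1 ≤ n := (Function.ne_iff.1 hy).choose.pos
  obtain ⟨α, β, hα, hαβ, hwβ, hvol⟩ := exists_dyson_exponents hn hr hw0 hw
  refine frequently_atTop.2 fun X₀ => ?_
  obtain ⟨y, ⟨hy0, hyA⟩, hY1, hX₀, hmn⟩ := hS.exists_mem_norm_of_eventually <|
    (eventually_gt_atTop 1).and <| ((tendsto_rpow_atTop hα).eventually_ge_atTop X₀).and
      ((tendsto_rpow_atTop (sub_pos.2 hwβ)).eventually_ge_atTop (m + n : ℝ))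
  set Y := ‖y‖
  have hY : 0 < Y := by linarith
  have hYvol : Y < (Y ^ α) ^ m * (Y ^ (-β)) ^ (n - 1) := by
    rw [← Real.rpow_mul_natCast hY.le, ← Real.rpow_mul_natCast hY.le, ← Real.rpow_add hY,
      Nat.cast_sub hn, Nat.cast_one]
    calc Y = Y ^ (1 : ℝ) := (Real.rpow_one Y).symm
      _ < _ := Real.rpow_lt_rpow_of_exponent_lt hY1 (by linarith)
  obtain ⟨x, hx0, hxX, hxA⟩ := exists_approx_of_transpose_approx A hy0 hyA
    (Real.rpow_pos_of_pos hY α) (Real.rpow_pos_of_pos hY (-β))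
    (Real.rpow_le_one_of_one_le_of_nonpos hY1.le (by nlinarith)) hYvol
  refine ⟨Y ^ α, hX₀, x, hx0, hxX, fun i => (hxA i).trans ?_⟩
  calc m * Y ^ (-r) * Y ^ α / Y + n * Y ^ (-β) = (m + n) * Y ^ (-β) := by
        rw [mul_assoc, mul_div_assoc, ← Real.rpow_add hY, ← Real.rpow_sub_one hY.ne',
          show -r + α - 1 = -β by linarith]
        ring
    _ ≤ Y ^ (β - w * α) * Y ^ (-β) := by gcongr
    _ = (Y ^ α) ^ (-w) := by
        rw [← Real.rpow_add hY, ← Real.rpow_mul hY.le]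
        ring_nf

theorem infinite_transposeApprox_zero {n m : ℕ} (hn : 1 ≤ n) (A : Matrix (Fin n) (Fin m) ℝ) :
    (transposeApprox A 0).Infinite := by
  have : NeZero n := ⟨by omega⟩
  refine (Set.infinite_univ.sdiff (Set.finite_singleton 0)).mono fun y hy => ⟨hy.2, fun j => ?_⟩
  rw [neg_zero, Real.rpow_zero]
  exact (abs_sub_round _).trans (by norm_num)

theorem infinite_transposeApprox_of_exact {n m : ℕ} {A : Matrix (Fin n) (Fin m) ℝ}
    {y : Fin n → ℤ} (hy : y ≠ 0) (h : ∀ j, nearInt (∑ i, A i j * y i) = 0) (r : ℝ) :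
    (transposeApprox A r).Infinite := by
  have hinj : Function.Injective fun k : ℕ => ((k + 1 : ℕ) : ℤ) • y :=
    (smul_left_injective ℤ hy).comp (Nat.cast_injective.comp (add_left_injective 1))
  refine Set.infinite_of_injective_forall_mem hinj fun k =>
    ⟨smul_ne_zero (by omega) hy, fun j => ?_⟩
  have hj : ∑ i, A i j * y i = round (∑ i, A i j * y i) := sub_eq_zero.1 (abs_eq_zero.1 (h j))
  have : ∑ i, A i j * (((k + 1 : ℕ) : ℤ) • y) i =
      (((k + 1 : ℕ) * round (∑ i, A i j * y i) : ℤ) : ℝ) := by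
    push_cast [← hj, Finset.mul_sum, Pi.smul_apply, smul_eq_mul]
    exact Finset.sum_congr rfl fun i _ => by ring
  rw [this, nearInt_intCast]
  positivity

theorem infinite_transposeApprox_of_frequently {n m : ℕ} {A : Matrix (Fin n) (Fin m) ℝ} {r : ℝ}
    (hr : 0 < r) (h : ∃ᶠ X in atTop, MatSol Aᵀ X r) : (transposeApprox A r).Infinite := by
  intro hfin
  have hinexact : ∀ y ∈ transposeApprox A r, ∃ j, 0 < nearInt (∑ i, A i j * y i) := by
    intro y hy
    by_contra! h0
    exact infinite_transposeApprox_of_exact hy.1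
      (fun j => (h0 j).antisymm (nearInt_nonneg _)) r hfin
  have hev : ∀ᶠ X in atTop, ∀ y ∈ transposeApprox A r, ∃ j, X ^ (-r) < nearInt (∑ i, A i j * y i) :=
    hfin.eventually_all.2 fun y hy =>
      let ⟨j, hj⟩ := hinexact y hy
      ((tendsto_rpow_neg_atTop hr).eventually (gt_mem_nhds hj)).mono fun _ hX => ⟨j, hX⟩
  obtain ⟨X, hsol, hXS⟩ := (h.and_eventually hev).exists
  have hX : 0 ≤ X := zero_le_one.trans hsol.one_le
  obtain ⟨y, hy0, hyX, hyA⟩ := hsol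
  have hyX' : ‖y‖ ≤ X := (pi_norm_le_iff_of_nonneg hX).2 fun i =>
    (Int.norm_eq_abs _).trans_le (hyX i)
  obtain ⟨j, hj⟩ := hXS y ⟨hy0, fun j => (hyA j).trans
    (Real.rpow_le_rpow_of_nonpos (norm_pos_iff.2 hy0) hyX' (by linarith))⟩
  exact (hyA j).not_gt hj

theorem ofReal_le_oexp {n m : ℕ} {A : Matrix (Fin n) (Fin m) ℝ} {r : ℝ}
    (h : ∃ᶠ X in atTop, MatSol A X r) : ENNReal.ofReal r ≤ oexp A :=
  le_sSup ⟨r, rfl, frequently_atTop.1 h⟩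

theorem frequently_matSol_of_ofReal_lt_oexp {n m : ℕ} {A : Matrix (Fin n) (Fin m) ℝ} {r : ℝ}
    (h : ENNReal.ofReal r < oexp A) : ∃ᶠ X in atTop, MatSol A X r := by
  obtain ⟨_, ⟨r', rfl, hr'⟩, hlt⟩ := lt_sSup_iff.1 h
  exact (frequently_atTop.2 hr').mono fun X hX => hX.mono (ENNReal.ofReal_lt_ofReal_iff'.1 hlt).1.le

theorem oexp_eq_top_of_fin_zero {m : ℕ} (hm : 0 < m) (A : Matrix (Fin 0) (Fin m) ℝ) :
    oexp A = ⊤ := by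
  refine ENNReal.eq_top_of_forall_nnreal_le fun r => ENNReal.ofReal_coe_nnreal ▸ ofReal_le_oexp ?_
  refine (eventually_ge_atTop 1).frequently.mono fun X hX =>
    ⟨Pi.single ⟨0, hm⟩ 1, by simp, fun j => ?_, finZeroElim⟩
  rcases eq_or_ne j ⟨0, hm⟩ with rfl | h <;> simp [*]
  linarith

theorem ofReal_dysonExponent {n : ℕ} (m : ℕ) (hn : 1 ≤ n) {c : ℝ} (hc : 0 ≤ c) :
    ENNReal.ofReal (dysonExponent n m c) =
      (m * ENNReal.ofReal c + m - 1) / ((n - 1) * ENNReal.ofReal c + n) := by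
  have hn' : (1 : ℝ) ≤ n := by exact_mod_cast hn
  rw [dysonExponent, ENNReal.ofReal_div_of_pos (by positivity), ENNReal.ofReal_sub _ zero_le_one,
    ENNReal.ofReal_add (by positivity) (by positivity),
    ENNReal.ofReal_add (by nlinarith) (by positivity), ENNReal.ofReal_mul (by positivity),
    ENNReal.ofReal_mul (by linarith), ENNReal.ofReal_sub _ zero_le_one]
  simp

theorem exists_mem_Ioo_lt_dysonExponent {n m : ℕ} (hn : 1 ≤ n) {c t : ℝ} (hc : 0 < c)
    (ht : t < dysonExponent n m c) : ∃ r ∈ Set.Ioo 0 c, t < dysonExponent n m r := by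
  have hn' : (1 : ℝ) ≤ n := by exact_mod_cast hn
  have hcont : ContinuousAt (dysonExponent n m) c :=
    (by fun_prop : Continuous fun r : ℝ => (m * r + m - 1 : ℝ)).continuousAt.div
      (by fun_prop) (by nlinarith)
  exact ((hcont.tendsto.mono_left nhdsWithin_le_nhds).eventually (lt_mem_nhds ht)).and
    (Ioo_mem_nhdsLT hc) |>.exists.imp fun r h => ⟨h.2, h.1⟩

theorem exists_infinite_transposeApprox_of_lt {n m : ℕ} (hn : 1 ≤ n) (hm : 1 ≤ m)
    (A : Matrix (Fin n) (Fin m) ℝ) {x : ℝ≥0∞}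
    (hx : x < (m * oexp Aᵀ + m - 1) / ((n - 1) * oexp Aᵀ + n)) :
    ∃ r, 0 ≤ r ∧ (transposeApprox A r).Infinite ∧ x.toReal < dysonExponent n m r := by
  rcases eq_top_or_lt_top (oexp Aᵀ) with hω | hω
  · -- for `n ≥ 2` the bound is `⊤ / ⊤ = 0` in `ℝ≥0∞`
    obtain rfl : n = 1 := by
      by_contra h
      have : (n - 1 : ℝ≥0∞) ≠ 0 := by
        rw [Ne, tsub_eq_zero_iff_le, Nat.cast_le_one]; omega
      simp [hω, ENNReal.mul_top this] at hx
    refine ⟨x.toReal + 1, by positivity, infinite_transposeApprox_of_frequently (by positivity)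
      (frequently_matSol_of_ofReal_lt_oexp (hω ▸ ENNReal.ofReal_lt_top)), ?_⟩
    have hm' : (1 : ℝ) ≤ m := by exact_mod_cast hm
    simp only [dysonExponent, Nat.cast_one, sub_self, zero_mul, zero_add, div_one]
    nlinarith [ENNReal.toReal_nonneg (a := x)]
  · set c := (oexp Aᵀ).toReal
    have hc : oexp Aᵀ = ENNReal.ofReal c := (ENNReal.ofReal_toReal hω.ne).symm
    rw [hc, ← ofReal_dysonExponent m hn ENNReal.toReal_nonneg,
      ENNReal.lt_ofReal_iff_toReal_lt (ne_top_of_lt hx)] at hx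
    rcases (ENNReal.toReal_nonneg : 0 ≤ c).eq_or_lt with h0 | hpos
    · exact ⟨0, le_rfl, infinite_transposeApprox_zero hn A, by rwa [h0]⟩
    · obtain ⟨r, ⟨hr0, hrc⟩, hr⟩ := exists_mem_Ioo_lt_dysonExponent hn hpos hx
      refine ⟨r, hr0.le, infinite_transposeApprox_of_frequently hr0
        (frequently_matSol_of_ofReal_lt_oexp ?_), hr⟩
      rw [hc, ENNReal.ofReal_lt_ofReal_iff_of_nonneg hr0.le]
      exact hrc

/-- Dyson's transference inequality:
`ω_{n,m}(A) ≥ (m ω_{m,n}(ᵗA) + m - 1) / ((n - 1) ω_{m,n}(ᵗA) + n)`. -/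
theorem dyson_transference (n m : ℕ) (A : Matrix (Fin n) (Fin m) ℝ) :
    oexp A ≥ ((m : ℝ≥0∞) * oexp Aᵀ + m - 1) / (((n : ℝ≥0∞) - 1) * oexp Aᵀ + n) := by
  rcases Nat.eq_zero_or_pos m with rfl | hm
  · simp
  rcases Nat.eq_zero_or_pos n with rfl | hn
  · simp [oexp_eq_top_of_fin_zero hm A]
  refine le_of_forall_lt_imp_le_of_dense fun x hx => ?_
  obtain ⟨r, hr, hS, hxr⟩ := exists_infinite_transposeApprox_of_lt hn hm A hx
  rw [← ENNReal.ofReal_toReal (ne_top_of_lt hx)]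
  exact ofReal_le_oexp
    (frequently_matSol_of_infinite_transposeApprox A hr hS ENNReal.toReal_nonneg hxr)
end

section
/- Let the Fibonacci words be defined by f₀ = b, f₁ = a, f_i = f_{i−1}f_{i−2} for i ≥ 2, over the two-letter alphabet {a, b}, with limit word f. For each n ≥ 2, the prefix φₙ of f of length F_{n+2} − 2 is a palindrome, where (Fₘ) is the Fibonacci sequence F₀ = 0, F₁ = 1, F_{m+2} = F_{m+1} + Fₘ. Moreover, φₙ = φ_{n−1}·ab·φ_{n−2} for even n ≥ 4 and φₙ = φ_{n−1}·ba·φ_{n−2} for odd n ≥ 5. -/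
/-!
Write `s_n` for `ba` when `n` is even and `ab` when `n` is odd. For `n ≥ 1` the word `f_{n+1}`
ends in `s_n`, so `f_{n+1} = φₙ sₙ`, and `f_{n+3} = f_{n+2} f_{n+1}` becomes
`φ_{n+2} = φ_{n+1} s_{n+1} φₙ`. Induction on this recurrence also gives the swapped
factorization `φ_{n+2} = φₙ sₙ φ_{n+1}`. Since `s_{n+1}` reversed is `sₙ`, reversing the first
factorization of `φ_{n+2}` yields the second one once `φₙ` and `φ_{n+1}` are palindromes.
-/

/-- The Fibonacci words: `f₀ = b`, `f₁ = a`, `f_i = f_{i-1} f_{i-2}`. -/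
def fibWord {α : Type*} (a b : α) : ℕ → List α
  | 0 => [b]
  | 1 => [a]
  | (n + 2) => fibWord a b (n + 1) ++ fibWord a b n

/-- The prefix `φₙ` of the Fibonacci word of length `F_{n+2} - 2`. -/
def fibPrefix {α : Type*} (a b : α) (n : ℕ) : List α :=
  (fibWord a b (n + 1)).take (Nat.fib (n + 2) - 2)

def fibSuffix {α : Type*} (a b : α) (n : ℕ) : List α := if Even n then [b, a] else [a, b]

section FibonacciWord

variable {α : Type*} (a b : α)

theorem fibWord_length : ∀ n, (fibWord a b n).length = Nat.fib (n + 1)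
  | 0 => rfl
  | 1 => rfl
  | n + 2 => by
    rw [fibWord, List.length_append, fibWord_length (n + 1), fibWord_length n,
      Nat.fib_add_two (n := n + 1), add_comm]

variable {a b}

theorem fibSuffix_add_two (n : ℕ) : fibSuffix a b (n + 2) = fibSuffix a b n := by
  simp [fibSuffix, Nat.even_add]

theorem fibSuffix_reverse (n : ℕ) : (fibSuffix a b (n + 1)).reverse = fibSuffix a b n := by
  by_cases h : Even n <;> simp [fibSuffix, h, Nat.even_add_one]

theorem fibSuffix_length (n : ℕ) : (fibSuffix a b n).length = 2 := by
  unfold fibSuffix; split <;> rfl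

theorem fibSuffix_isSuffix_fibWord : ∀ {n}, 1 ≤ n → fibSuffix a b n <:+ fibWord a b (n + 1)
  | 1, _ => List.suffix_refl _
  | 2, _ => List.suffix_append [a] _
  | n + 3, _ => by
    rw [fibSuffix_add_two]
    exact (fibSuffix_isSuffix_fibWord (n := n + 1) (by omega)).trans (List.suffix_append _ _)

theorem fibWord_eq_fibPrefix_append {n : ℕ} (hn : 1 ≤ n) :
    fibWord a b (n + 1) = fibPrefix a b n ++ fibSuffix a b n := by
  obtain ⟨u, hu⟩ := fibSuffix_isSuffix_fibWord (a := a) (b := b) hn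
  have hlen : u.length = Nat.fib (n + 1 + 1) - 2 := by
    have := congrArg List.length hu
    rw [List.length_append, fibSuffix_length, fibWord_length] at this
    omega
  rw [fibPrefix, ← hu, List.take_left' hlen]

theorem fibPrefix_add_two {n : ℕ} (hn : 1 ≤ n) :
    fibPrefix a b (n + 2) = fibPrefix a b (n + 1) ++ fibSuffix a b (n + 1) ++ fibPrefix a b n := by
  have h : fibWord a b (n + 3) = fibWord a b (n + 2) ++ fibWord a b (n + 1) := rfl
  rw [fibWord_eq_fibPrefix_append (n := n + 2) (by omega),
    fibWord_eq_fibPrefix_append (n := n + 1) (by omega), fibWord_eq_fibPrefix_append hn,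
    fibSuffix_add_two, ← List.append_assoc] at h
  exact List.append_cancel_right h

theorem fibPrefix_add_two_swap {n : ℕ} (hn : 1 ≤ n) :
    fibPrefix a b (n + 2) = fibPrefix a b n ++ fibSuffix a b n ++ fibPrefix a b (n + 1) := by
  induction n, hn using Nat.le_induction with
  | base => rfl
  | succ n hn ih =>
    calc fibPrefix a b (n + 3)
        = fibPrefix a b (n + 2) ++ fibSuffix a b n ++ fibPrefix a b (n + 1) := by
          rw [fibPrefix_add_two (by omega), fibSuffix_add_two]
      _ = fibPrefix a b (n + 1) ++ fibSuffix a b (n + 1) ++ fibPrefix a b n ++ fibSuffix a b n ++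
            fibPrefix a b (n + 1) := by
          rw [fibPrefix_add_two hn]
      _ = fibPrefix a b (n + 1) ++ fibSuffix a b (n + 1) ++ fibPrefix a b (n + 2) := by
          rw [ih]
          simp only [List.append_assoc]

theorem fibPrefix_reverse : ∀ n, (fibPrefix a b n).reverse = fibPrefix a b n
  | 0 => rfl
  | 1 => rfl
  | 2 => rfl
  | n + 3 => by
    calc (fibPrefix a b (n + 3)).reverse
        = (fibPrefix a b (n + 2) ++ fibSuffix a b (n + 2) ++ fibPrefix a b (n + 1)).reverse := by
          rw [fibPrefix_add_two (by omega)]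
      _ = fibPrefix a b (n + 1) ++ fibSuffix a b (n + 1) ++ fibPrefix a b (n + 2) := by
          simp only [List.reverse_append, fibPrefix_reverse (n + 1), fibPrefix_reverse (n + 2),
            fibSuffix_reverse, List.append_assoc]
      _ = fibPrefix a b (n + 3) := (fibPrefix_add_two_swap (by omega)).symm

end FibonacciWord

theorem fibPrefix_palindrome_general {α : Type*} (a b : α) :
    (∀ i : ℕ, 1 ≤ i → fibWord a b i <+: fibWord a b (i + 1)) ∧
    (∀ n : ℕ, 2 ≤ n → (fibPrefix a b n).reverse = fibPrefix a b n) ∧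
    (∀ n : ℕ, 4 ≤ n → Even n →
      fibPrefix a b n = fibPrefix a b (n - 1) ++ [a, b] ++ fibPrefix a b (n - 2)) ∧
    (∀ n : ℕ, 5 ≤ n → Odd n →
      fibPrefix a b n = fibPrefix a b (n - 1) ++ [b, a] ++ fibPrefix a b (n - 2)) := by
  refine ⟨?_, fun n _ => fibPrefix_reverse n, ?_, ?_⟩
  · rintro (_ | i) hi
    · omega
    · exact List.prefix_append _ _
  · intro n hn hn_even
    obtain ⟨m, rfl⟩ : ∃ m, n = m + 2 := ⟨n - 2, by omega⟩
    have hm : ¬Even (m + 1) := by simpa [Nat.even_add_one] using hn_even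
    simp [fibPrefix_add_two (n := m) (by omega), fibSuffix, hm]
  · intro n hn hn_odd
    obtain ⟨m, rfl⟩ : ∃ m, n = m + 2 := ⟨n - 2, by omega⟩
    have hm : Even (m + 1) := by simpa [Nat.even_add_one, parity_simps] using hn_odd
    simp [fibPrefix_add_two (n := m) (by omega), fibSuffix, hm]

/-- For `n ≥ 2`, the prefix `φₙ` of the infinite Fibonacci word of length `F_{n+2} - 2`
is a palindrome; moreover `φₙ = φ_{n-1} · ab · φ_{n-2}` for even `n ≥ 4` and
`φₙ = φ_{n-1} · ba · φ_{n-2}` for odd `n ≥ 5`.  (Each `fibWord a b (i + 1)` is indeed a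
prefix of the next one, so `φₙ` is a prefix of the limit word.) -/
theorem fibPrefix_palindrome {α : Type*} (a b : α) (hab : a ≠ b) :
    (∀ i : ℕ, 1 ≤ i → fibWord a b i <+: fibWord a b (i + 1)) ∧
    (∀ n : ℕ, 2 ≤ n → (fibPrefix a b n).reverse = fibPrefix a b n) ∧
    (∀ n : ℕ, 4 ≤ n → Even n →
      fibPrefix a b n = fibPrefix a b (n - 1) ++ [a, b] ++ fibPrefix a b (n - 2)) ∧
    (∀ n : ℕ, 5 ≤ n → Odd n →
      fibPrefix a b n = fibPrefix a b (n - 1) ++ [b, a] ++ fibPrefix a b (n - 2)) :=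
  fibPrefix_palindrome_general a b
end

section
/- For any integer n ≥ 1 and any real number ξ not algebraic of degree ≤ 1 (i.e., irrational), λₙ(ξ) ≥ (w₁(ξ) − n + 1)/n, where w₁(ξ) is the supremum of w such that 0 < |qξ − p| ≤ max(|p|,|q|)^{−w} has infinitely many integer solutions (p, q), and λₙ(ξ) is the supremum of λ such that 0 < |x₀| ≤ X and max_{1≤m≤n} |x₀ξᵐ − xₘ| ≤ X^{−λ} has an integer solution for arbitrarily large X. -/
open scoped ENNReal

/-- `w₁(ξ)`: supremum of `w` such that `0 < |qξ - p| ≤ max(|p|,|q|)^(-w)` has infinitely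
many integer solutions `(p, q)`. -/
noncomputable def wOneExp (ξ : ℝ) : ℝ≥0∞ :=
  sSup {w : ℝ≥0∞ | ∃ r : ℝ, w = ENNReal.ofReal r ∧
    {pq : ℤ × ℤ | 0 < |(pq.2 : ℝ) * ξ - pq.1| ∧
      |(pq.2 : ℝ) * ξ - pq.1| ≤ (max (|pq.1| : ℝ) (|pq.2| : ℝ)) ^ (-r)}.Infinite}

/-- The system `0 < |x₀| ≤ X`, `max_{1 ≤ m ≤ n} |x₀ξᵐ - xₘ| ≤ X^(-l)` is solvable. -/
def LamSol (n : ℕ) (ξ X l : ℝ) : Prop :=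
  ∃ x : Fin (n + 1) → ℤ, x 0 ≠ 0 ∧ (|x 0| : ℝ) ≤ X ∧
    ∀ m : Fin (n + 1), 1 ≤ (m : ℕ) → |(x 0 : ℝ) * ξ ^ (m : ℕ) - x m| ≤ X ^ (-l)

/-- `λₙ(ξ)`: supremum of `λ` such that the above system is solvable for arbitrarily
large `X`. -/
noncomputable def lamExp (n : ℕ) (ξ : ℝ) : ℝ≥0∞ :=
  sSup {w : ℝ≥0∞ | ∃ r : ℝ, w = ENNReal.ofReal r ∧
    ∀ X₀ : ℝ, ∃ X : ℝ, X₀ ≤ X ∧ LamSol n ξ X r}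

/-!
Dirichlet's pigeonhole argument on the fractional parts of `qξ, …, qξⁿ` gives `λₙ(ξ) ≥ 1/n`;
this is the whole claim when `w₁(ξ) ≤ n`, where truncated subtraction makes the right-hand side
`1/n`. Otherwise take a pair `(p, q)` with `|qξ - p| ≤ H^(-r)`, `H = max(|p|, |q|)`. The point
`x = (qⁿ, qⁿ⁻¹p, …, pⁿ)` satisfies `|qⁿξᵐ - qⁿ⁻ᵐpᵐ| = |q|ⁿ⁻ᵐ |(qξ)ᵐ - pᵐ| ≪ Hⁿ⁻¹⁻ʳ`, so with
`X = Hⁿ` it solves the system for every exponent below `(r - n + 1)/n` once `H` is large, and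
infinitely many such pairs have arbitrarily large `H`.
-/

open Filter

def approxPairs (ξ r : ℝ) : Set (ℤ × ℤ) :=
  {pq : ℤ × ℤ | 0 < |(pq.2 : ℝ) * ξ - pq.1| ∧
    |(pq.2 : ℝ) * ξ - pq.1| ≤ (max (|pq.1| : ℝ) (|pq.2| : ℝ)) ^ (-r)}

theorem exists_int_abs_mul_sub_lt {ι : Type*} [Fintype ι] (α : ι → ℝ) {Q : ℕ} (hQ : 0 < Q) :
    ∃ q : ℤ, q ≠ 0 ∧ |q| ≤ Q ^ Fintype.card ι ∧ ∀ i, ∃ p : ℤ, |q * α i - p| < (Q : ℝ)⁻¹ := by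
  classical
  have hQ' : (0 : ℝ) < Q := by exact_mod_cast hQ
  let box : ℕ → ι → ℤ := fun t i => ⌊Int.fract (t * α i) * Q⌋
  have hbox : Set.MapsTo box ↑(Finset.range (Q ^ Fintype.card ι + 1))
      (Fintype.piFinset fun _ : ι => Finset.Ico 0 (Q : ℤ) : Set (ι → ℤ)) := by
    intro t _
    simp only [Finset.mem_coe, Fintype.mem_piFinset, Finset.mem_Ico, box]
    intro i
    refine ⟨Int.floor_nonneg.2 (by positivity), Int.floor_lt.2 ?_⟩
    push_cast
    nlinarith [Int.fract_lt_one (t * α i)]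
  obtain ⟨t₁, ht₁, t₂, ht₂, hne, heq⟩ := Finset.exists_ne_map_eq_of_card_lt_of_maps_to
    (by simp [Fintype.card_piFinset]) hbox
  refine ⟨t₁ - t₂, by omega, ?_, fun i => ⟨⌊t₁ * α i⌋ - ⌊t₂ * α i⌋, ?_⟩⟩
  · simp only [Finset.mem_range] at ht₁ ht₂
    exact abs_sub_le_of_nonneg_of_le (by positivity) (by exact_mod_cast Nat.le_of_lt_succ ht₁)
      (by positivity) (by exact_mod_cast Nat.le_of_lt_succ ht₂)
  · have hfloor := Int.abs_sub_lt_one_of_floor_eq_floor (congrFun heq i)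
    rw [← sub_mul, abs_mul, abs_of_pos hQ', ← lt_div_iff₀ hQ', one_div, Int.fract, Int.fract]
      at hfloor
    have hdiff : ((t₁ - t₂ : ℤ) : ℝ) * α i - ((⌊t₁ * α i⌋ - ⌊t₂ * α i⌋ : ℤ) : ℝ)
        = (t₁ * α i - ⌊t₁ * α i⌋) - (t₂ * α i - ⌊t₂ * α i⌋) := by push_cast; ring
    rwa [hdiff]

theorem lamSol_pow_inv {n : ℕ} (hn : 1 ≤ n) (ξ : ℝ) {Q : ℕ} (hQ : 0 < Q) :
    LamSol n ξ ((Q : ℝ) ^ n) (n : ℝ)⁻¹ := by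
  obtain ⟨q, hq0, hqQ, hp⟩ := exists_int_abs_mul_sub_lt (fun k : Fin n => ξ ^ (k.succ : ℕ)) hQ
  choose p hp using hp
  rw [Fintype.card_fin] at hqQ
  refine ⟨Fin.cons q p, hq0, by simp; exact_mod_cast hqQ, fun m hm => ?_⟩
  obtain ⟨k, rfl⟩ := Fin.exists_succ_eq.2 (Fin.pos_iff_ne_zero.1 hm)
  have hQ' : (0 : ℝ) < Q := by exact_mod_cast hQ
  have hpow : ((Q : ℝ) ^ n) ^ (-(n : ℝ)⁻¹) = (Q : ℝ)⁻¹ := by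
    rw [← Real.rpow_natCast, ← Real.rpow_mul hQ'.le, mul_neg,
      mul_inv_cancel₀ (by positivity), Real.rpow_neg_one]
  simpa [hpow] using (hp k).le

theorem inv_natCast_le_lamExp {n : ℕ} (hn : 1 ≤ n) (ξ : ℝ) : (n : ℝ≥0∞)⁻¹ ≤ lamExp n ξ := by
  refine le_sSup ⟨(n : ℝ)⁻¹, ?_, fun X₀ => ?_⟩
  · rw [ENNReal.ofReal_inv_of_pos (by exact_mod_cast hn), ENNReal.ofReal_natCast]
  obtain ⟨Q, hQ⟩ := exists_nat_ge (max X₀ 1)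
  have hQ1 : (1 : ℝ) ≤ Q := (le_max_right _ _).trans hQ
  refine ⟨(Q : ℝ) ^ n, ?_, lamSol_pow_inv hn ξ (by exact_mod_cast hQ1)⟩
  exact (le_max_left _ _).trans (hQ.trans (le_self_pow₀ hQ1 (by omega)))

theorem abs_pow_mul_sub_pow_mul_le {q p ξ M : ℝ} (hq : |q| ≤ M) (hqξ : |q * ξ| ≤ M)
    (hp : |p| ≤ M) {m n : ℕ} (hm : 1 ≤ m) (hmn : m ≤ n) :
    |q ^ n * ξ ^ m - q ^ (n - m) * p ^ m| ≤ n * M ^ (n - 1) * |q * ξ - p| := by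
  have hM : 0 ≤ M := (abs_nonneg q).trans hq
  have hsplit : q ^ n * ξ ^ m - q ^ (n - m) * p ^ m = q ^ (n - m) * ((q * ξ) ^ m - p ^ m) := by
    obtain ⟨k, rfl⟩ := Nat.exists_eq_add_of_le hmn
    rw [Nat.add_sub_cancel_left]; ring
  calc |q ^ n * ξ ^ m - q ^ (n - m) * p ^ m|
      = |q| ^ (n - m) * |(q * ξ) ^ m - p ^ m| := by rw [hsplit, abs_mul, abs_pow]
    _ ≤ M ^ (n - m) * (|q * ξ - p| * m * M ^ (m - 1)) := by
        gcongr
        exact (abs_pow_sub_pow_le _ _ _).trans (by gcongr; exact max_le hqξ hp)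
    _ = m * M ^ (n - 1) * |q * ξ - p| := by
        rw [show n - 1 = (n - m) + (m - 1) by omega, pow_add]; ring
    _ ≤ n * M ^ (n - 1) * |q * ξ - p| := by gcongr

theorem lamSol_of_abs_mul_sub_le {n : ℕ} (hn : 1 ≤ n) {ξ r s : ℝ} (hr : 0 ≤ r) {pq : ℤ × ℤ}
    (hle : |(pq.2 : ℝ) * ξ - pq.1| ≤ ‖pq‖ ^ (-r)) (hH : 1 < ‖pq‖)
    (hK : n * 2 ^ (n - 1) ≤ ‖pq‖ ^ (r - n + 1 - n * s)) :
    LamSol n ξ (‖pq‖ ^ n) s := by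
  obtain ⟨p, q⟩ := pq
  set H := ‖(p, q)‖ with hHdef
  have hH0 : 0 < H := one_pos.trans hH
  have hp : |(p : ℝ)| ≤ H := by simpa only [Int.norm_eq_abs] using norm_fst_le (p, q)
  have hq : |(q : ℝ)| ≤ H := by simpa only [Int.norm_eq_abs] using norm_snd_le (p, q)
  have hδ : |(q : ℝ) * ξ - p| ≤ 1 :=
    hle.trans (Real.rpow_le_one_of_one_le_of_nonpos hH.le (neg_nonpos.2 hr))
  have hqξ : |(q : ℝ) * ξ| ≤ 2 * H := by
    calc |(q : ℝ) * ξ| = |((q : ℝ) * ξ - p) + p| := by rw [sub_add_cancel]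
      _ ≤ 1 + H := (abs_add_le _ _).trans (add_le_add hδ hp)
      _ ≤ 2 * H := by linarith
  have hq0 : q ≠ 0 := by
    rintro rfl
    have : H ≤ 1 := by simpa [hHdef, Prod.norm_def, Int.norm_eq_abs] using hδ
    linarith
  refine ⟨fun m => q ^ (n - m) * p ^ (m : ℕ), by simpa using pow_ne_zero n hq0, ?_,
    fun m hm => ?_⟩
  · simpa using pow_le_pow_left₀ (abs_nonneg _) hq n
  have hmn : (m : ℕ) ≤ n := Nat.lt_succ_iff.1 m.isLt
  have hpow : H ^ (n - 1) = H ^ ((n : ℝ) - 1) := by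
    rw [← Real.rpow_natCast, Nat.cast_sub hn, Nat.cast_one]
  simp only [Fin.val_zero, Nat.sub_zero, pow_zero, mul_one]
  push_cast
  calc |(q : ℝ) ^ n * ξ ^ (m : ℕ) - (q : ℝ) ^ (n - (m : ℕ)) * (p : ℝ) ^ (m : ℕ)|
      ≤ n * (2 * H) ^ (n - 1) * |(q : ℝ) * ξ - p| :=
        abs_pow_mul_sub_pow_mul_le (by linarith) hqξ (by linarith) hm hmn
    _ ≤ n * 2 ^ (n - 1) * (H ^ ((n : ℝ) - 1) * H ^ (-r)) := by
        rw [mul_pow, hpow, mul_assoc (n : ℝ), mul_assoc (n : ℝ), mul_assoc]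
        gcongr
    _ ≤ H ^ (r - n + 1 - n * s) * (H ^ ((n : ℝ) - 1) * H ^ (-r)) := by gcongr
    _ = (H ^ n) ^ (-s) := by
        rw [← Real.rpow_add hH0, ← Real.rpow_add hH0, ← Real.rpow_natCast,
          ← Real.rpow_mul hH0.le]
        ring_nf

theorem ofReal_le_lamExp {n : ℕ} {ξ t : ℝ}
    (h : ∀ s, 0 < s → s < t → ∀ X₀, ∃ X, X₀ ≤ X ∧ LamSol n ξ X s) :
    ENNReal.ofReal t ≤ lamExp n ξ := by
  refine le_of_forall_lt_imp_le_of_dense fun c hc => ?_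
  have hc_top : c ≠ ⊤ := hc.ne_top
  rcases eq_or_ne c 0 with rfl | hc0
  · exact bot_le
  exact le_sSup ⟨c.toReal, (ENNReal.ofReal_toReal hc_top).symm,
    h _ (ENNReal.toReal_pos hc0 hc_top) ((ENNReal.lt_ofReal_iff_toReal_lt hc_top).1 hc)⟩

theorem ofReal_sub_div_le_lamExp {n : ℕ} (hn : 1 ≤ n) {ξ r : ℝ} (hr : (approxPairs ξ r).Infinite) :
    ENNReal.ofReal ((r - n + 1) / n) ≤ lamExp n ξ := by
  refine ofReal_le_lamExp fun s hs0 hs X₀ => ?_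
  have hn0 : (0 : ℝ) < n := by exact_mod_cast hn
  have hε : 0 < r - n + 1 - n * s := by rw [lt_div_iff₀ hn0] at hs; linarith
  have hr0 : 0 ≤ r := by nlinarith [(Nat.one_le_cast (α := ℝ)).2 hn]
  have hnorm : Tendsto (‖·‖) (cofinite : Filter (ℤ × ℤ)) atTop :=
    cocompact_eq_cofinite (ℤ × ℤ) ▸ tendsto_norm_cocompact_atTop
  have hlarge : ∀ᶠ H : ℝ in atTop, 1 < H ∧ X₀ ≤ H ^ n ∧ n * 2 ^ (n - 1) ≤ H ^ (r - n + 1 - n * s) :=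
    (eventually_gt_atTop 1).and (((tendsto_pow_atTop (by omega)).eventually_ge_atTop X₀).and
      ((tendsto_rpow_atTop hε).eventually_ge_atTop _))
  obtain ⟨pq, ⟨-, hle⟩, h1, hX, hK⟩ :=
    ((Set.infinite_iff_frequently_cofinite.1 hr).and_eventually (hnorm.eventually hlarge)).exists
  exact ⟨_, hX, lamSol_of_abs_mul_sub_le hn hr0 hle h1 hK⟩

/-- The bound `r ≤ nλₙ(ξ) + n - 1`, arranged so that truncated subtraction cannot spoil it. -/
theorem ofReal_le_lamExp_mul_sub_one_add {n : ℕ} (hn : 1 ≤ n) {ξ r : ℝ}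
    (hr : (approxPairs ξ r).Infinite) :
    ENNReal.ofReal r ≤ lamExp n ξ * n - 1 + n := by
  have hn0 : (0 : ℝ) < n := by exact_mod_cast hn
  rcases eq_or_ne (lamExp n ξ) ⊤ with hL | hL
  · rw [hL, ENNReal.top_mul (by exact_mod_cast (by omega : n ≠ 0))]
    simp
  set ℓ := (lamExp n ξ).toReal
  have hdir : (n : ℝ)⁻¹ ≤ ℓ := by
    simpa using ENNReal.toReal_mono hL (inv_natCast_le_lamExp hn ξ)
  have hr' : (r - n + 1) / n ≤ ℓ :=
    (ENNReal.ofReal_le_iff_le_toReal hL).1 (ofReal_sub_div_le_lamExp hn hr)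
  rw [div_le_iff₀ hn0] at hr'
  rw [inv_le_iff_one_le_mul₀ hn0] at hdir
  have hconv : lamExp n ξ * n - 1 + n = ENNReal.ofReal (ℓ * n - 1 + n) := by
    rw [ENNReal.ofReal_add (by linarith) hn0.le, ENNReal.ofReal_sub _ zero_le_one,
      ENNReal.ofReal_mul ENNReal.toReal_nonneg, ENNReal.ofReal_toReal hL, ENNReal.ofReal_natCast,
      ENNReal.ofReal_one]
  rw [hconv]
  exact ENNReal.ofReal_le_ofReal (by linarith)

theorem lamExp_ge_general (n : ℕ) (hn : 1 ≤ n) (ξ : ℝ) :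
    lamExp n ξ ≥ (wOneExp ξ - (n : ℝ≥0∞) + 1) / (n : ℝ≥0∞) := by
  have hn0 : (n : ℝ≥0∞) ≠ 0 := by exact_mod_cast (by omega : n ≠ 0)
  rw [ge_iff_le, ENNReal.div_le_iff hn0 (ENNReal.natCast_ne_top n)]
  have hL : 1 ≤ lamExp n ξ * n := by
    rw [mul_comm]
    exact (ENNReal.inv_le_iff_le_mul (fun _ => hn0)
      (fun h => absurd h (ENNReal.natCast_ne_top n))).1 (inv_natCast_le_lamExp hn ξ)
  have hw : wOneExp ξ ≤ lamExp n ξ * n - 1 + n :=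
    sSup_le fun _ ⟨r, hw, hr⟩ => hw ▸ ofReal_le_lamExp_mul_sub_one_add hn hr
  calc wOneExp ξ - n + 1 ≤ lamExp n ξ * n - 1 + 1 := add_le_add_left (tsub_le_iff_right.2 hw) _
    _ = lamExp n ξ * n := tsub_add_cancel_of_le hL

/-- For any `n ≥ 1` and any irrational real `ξ`, `λₙ(ξ) ≥ (w₁(ξ) - n + 1)/n`. -/
theorem lamExp_ge (n : ℕ) (hn : 1 ≤ n) (ξ : ℝ) (hξ : Irrational ξ) :
    lamExp n ξ ≥ (wOneExp ξ - (n : ℝ≥0∞) + 1) / (n : ℝ≥0∞) :=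
  lamExp_ge_general n hn ξ
end
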